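/- arXiv:2511.09756 — 5 statements merged into one kernel-verified Lean document; each statement's English description precedes it below -/
import Mathlib

section
/- Let a gate be a vertical segment from (x₀, m) to (x₀, M) with m ≤ M, and fix slopes α < β. A trajectory starting at (x, y) with x < x₀ and with all slopes in [α, β] (i.e., a function f : [x, ∞) → ℝ with f(x) = y and α ≤ (f(s)-f(t))/(s-t) ≤ β for all t < s) can avoid the gate (f(x₀) ∉ [m, M]) if and only if (x, y) lies outside the closed triangle with vertex rays of slope α from (x₀, M) and slope β from (x₀, m) extended leftward; consequently, the set of x for which some starting height y forces a crossing from every trajectory is an interval of length exactly (M - m)/(β - α). -/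
open Set MeasureTheory

/-- A trajectory from `(x, y)` with all slopes in `[α, β]`:
`f x = y` and `α (s - t) ≤ f s - f t ≤ β (s - t)` for all `x ≤ t ≤ s`. -/
def IsTraj (α β x y : ℝ) (f : ℝ → ℝ) : Prop :=
  f x = y ∧ ∀ t s : ℝ, x ≤ t → t ≤ s →
    α * (s - t) ≤ f s - f t ∧ f s - f t ≤ β * (s - t)

/-- Single-gate anti-slalom analysis.  The gate is the vertical segment `{x₀} × [m, M]`.
(1) A trajectory from `(x, y)` (with `x < x₀`) can avoid the gate iff `(x, y)` lies outside
the closed triangle bounded by the leftward ray of slope `α` through `(x₀, m)` and the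
leftward ray of slope `β` through `(x₀, M)` (the region of forced crossing).
(2) Consequently, the set of `x` for which some starting height `y` forces every trajectory
to cross has measure exactly `(M - m) / (β - α)`. -/
theorem single_gate_crossing (α β x₀ m M : ℝ) (hαβ : α < β) (hmM : m ≤ M) :
    (∀ x y : ℝ, x < x₀ →
      ((∃ f : ℝ → ℝ, IsTraj α β x y f ∧ f x₀ ∉ Icc m M) ↔
        ¬ (m + α * (x - x₀) ≤ y ∧ y ≤ M + β * (x - x₀)))) ∧
    volume {x : ℝ | x < x₀ ∧ ∃ y : ℝ, ∀ f : ℝ → ℝ, IsTraj α β x y f → f x₀ ∈ Icc m M}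
      = ENNReal.ofReal ((M - m) / (β - α)) := by
  have hβα : (0:ℝ) < β - α := sub_pos.mpr hαβ
  have key : ∀ x y : ℝ, x < x₀ →
      ((∃ f : ℝ → ℝ, IsTraj α β x y f ∧ f x₀ ∉ Icc m M) ↔
        ¬ (m + α * (x - x₀) ≤ y ∧ y ≤ M + β * (x - x₀))) := by
    intro x y hx
    constructor
    · rintro ⟨f, ⟨hfx, hslope⟩, hout⟩ ⟨h1, h2⟩
      obtain ⟨hl, hr⟩ := hslope x x₀ le_rfl hx.le
      rw [hfx] at hl hr
      exact hout ⟨by nlinarith, by nlinarith⟩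
    · intro h
      rw [not_and_or, not_le, not_le] at h
      rcases h with h | h
      · refine ⟨fun t => y + α * (t - x), ⟨by ring,
          fun t s ht hts => by constructor <;> dsimp only <;> nlinarith⟩, ?_⟩
        rintro ⟨h1, -⟩
        dsimp only at h1
        nlinarith
      · refine ⟨fun t => y + β * (t - x), ⟨by ring,
          fun t s ht hts => by constructor <;> dsimp only <;> nlinarith⟩, ?_⟩
        rintro ⟨-, h2⟩
        dsimp only at h2
        nlinarith
  refine ⟨key, ?_⟩
  have hset : {x : ℝ | x < x₀ ∧ ∃ y : ℝ, ∀ f : ℝ → ℝ, IsTraj α β x y f → f x₀ ∈ Icc m M}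
      = Ico (x₀ - (M - m) / (β - α)) x₀ := by
    ext x
    simp only [mem_setOf_eq, mem_Ico]
    constructor
    · rintro ⟨hx, y, hy⟩
      refine ⟨?_, hx⟩
      have hnot : ¬ (∃ f : ℝ → ℝ, IsTraj α β x y f ∧ f x₀ ∉ Icc m M) := by
        rintro ⟨f, hf, hout⟩
        exact hout (hy f hf)
      have hreg := not_not.mp ((key x y hx).not.mp hnot)
      rw [sub_le_comm, le_div_iff₀ hβα]
      nlinarith [hreg.1, hreg.2]
    · rintro ⟨hx1, hx2⟩
      refine ⟨hx2, m + α * (x - x₀), fun f hf => ?_⟩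
      by_contra hout
      have h2 : m + α * (x - x₀) ≤ M + β * (x - x₀) := by
        rw [sub_le_comm, le_div_iff₀ hβα] at hx1
        nlinarith
      exact (key x _ hx2).mp ⟨f, hf, hout⟩ ⟨le_rfl, h2⟩
  rw [hset, Real.volume_Ico]
  congr 1
  ring
end

section
/- Crossing inequality for finitely many gates: given finitely many gates (vertical segments [mᵢ, Mᵢ] at positions xᵢ) and slopes α < β, let t(x,y) be the minimal number of gates crossed by any trajectory starting at (x,y) with slopes confined to [α, β], and T(x) = sup_y t(x,y). Then ∫_ℝ T(x) dx ≤ (1/(β-α)) · Σᵢ (Mᵢ - mᵢ). -/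
/-!
Sort the gates from left to right. From `(p, v)` a trajectory reaches exactly the heights of a
window of width `(β - α) d` at a gate at distance `d`, so a dynamic programme along the gates
gives an integer, upper semicontinuous bound `dpCost` on the crossings: the cost before a gate is
the window minimum (erosion) of the cost at the gate. Between two consecutive gates this bounds
`T(x)` by the width profile of the cost at the next gate, evaluated at `(β - α)` times the
distance to it. The erosion inequality `∫ erosion_c h + ∫_{[0, c)} widthProfile h ≤ ∫ h`, proved
level set by level set by a translation argument, pays for each slab out of the integral of the
cost, and crossing a gate adds at most its length `Mᵢ - mᵢ` to that integral. Telescoping gives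
`(β - α) ∫ T ≤ ∑ᵢ (Mᵢ - mᵢ)`.
-/

open Set MeasureTheory
open scoped ENNReal

/-- `crossT α β xs ms Ms x y`: minimal number of gates (vertical segments `{xs i} × [ms i, Ms i]`)
crossed by a trajectory starting at `(x, y)` with slopes in `[α, β]`. -/
noncomputable def crossT (α β : ℝ) {n : ℕ} (xs ms Ms : Fin n → ℝ) (x y : ℝ) : ℝ≥0∞ :=
  ⨅ (f : ℝ → ℝ) (_ : IsTraj α β x y f),
    (({i : Fin n | x ≤ xs i ∧ f (xs i) ∈ Icc (ms i) (Ms i)}.ncard : ℝ≥0∞))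

section Trajectories

variable {α β x y : ℝ}

theorem IsTraj.piecewise {p : ℝ} {f₁ f₂ : ℝ → ℝ} (h₁ : IsTraj α β x y f₁) (hxp : x ≤ p)
    (h₂ : IsTraj α β p (f₁ p) f₂) :
    IsTraj α β x y (fun s => if s < p then f₁ s else f₂ s) := by
  refine ⟨?_, fun t s hxt hts => ?_⟩
  · rcases hxp.lt_or_eq with hxp | rfl
    · simpa [hxp] using h₁.1
    · simpa [h₁.1] using h₂.1
  by_cases hs : s < p
  · simpa [hs, hts.trans_lt hs] using h₁.2 t s hxt hts
  by_cases ht : t < p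
  · obtain ⟨h₁l, h₁u⟩ := h₁.2 t p hxt ht.le
    obtain ⟨h₂l, h₂u⟩ := h₂.2 p s le_rfl (not_lt.1 hs)
    simp only [hs, ht, if_true, if_false]
    rw [h₂.1] at h₂l h₂u
    constructor <;> linarith
  · simpa [hs, ht] using h₂.2 t s (not_lt.1 ht) hts

/-- The witness has slope `β` until it is `δ = u - (y + α (p - x))` above the line of slope `α`
through `(x, y)`, and slope `α` afterwards. -/
theorem exists_isTraj_apply_eq (hαβ : α ≤ β) {p u : ℝ}
    (hu : u ∈ Icc (y + α * (p - x)) (y + α * (p - x) + (β - α) * (p - x))) :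
    ∃ f, IsTraj α β x y f ∧ f p = u := by
  set δ := u - (y + α * (p - x))
  have hδ : 0 ≤ δ := by simp only [δ]; linarith [hu.1]
  refine ⟨fun s => y + α * (s - x) + min ((β - α) * (s - x)) δ, ⟨by simp [hδ], ?_⟩, ?_⟩
  · intro t s hxt hts
    have hmono : min ((β - α) * (t - x)) δ ≤ min ((β - α) * (s - x)) δ :=
      min_le_min_right _ (by nlinarith)
    have hlip : min ((β - α) * (s - x)) δ ≤ min ((β - α) * (t - x)) δ + (β - α) * (s - t) := by
      rcases min_cases ((β - α) * (t - x)) δ with ⟨h, _⟩ | ⟨h, _⟩ <;> rw [h]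
      · exact (min_le_left _ _).trans (by linarith)
      · exact (min_le_right _ _).trans (by nlinarith)
    constructor <;> nlinarith
  · have : δ ≤ (β - α) * (p - x) := by simp only [δ]; linarith [hu.2]
    simp only [min_eq_right this, δ]
    ring

theorem crossT_le_of_isTraj {n : ℕ} {xs ms Ms : Fin n → ℝ} {f : ℝ → ℝ} (hf : IsTraj α β x y f) :
    crossT α β xs ms Ms x y ≤ {i | x ≤ xs i ∧ f (xs i) ∈ Icc (ms i) (Ms i)}.ncard :=
  iInf₂_le f hf

theorem crossT_comp_perm {n : ℕ} (xs ms Ms : Fin n → ℝ) (σ : Equiv.Perm (Fin n)) :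
    crossT α β (xs ∘ σ) (ms ∘ σ) (Ms ∘ σ) x y = crossT α β xs ms Ms x y := by
  refine iInf_congr fun f => iInf_congr fun _ => ?_
  have : {i | x ≤ (xs ∘ σ) i ∧ f ((xs ∘ σ) i) ∈ Icc ((ms ∘ σ) i) ((Ms ∘ σ) i)} =
      σ.symm '' {i | x ≤ xs i ∧ f (xs i) ∈ Icc (ms i) (Ms i)} := by
    ext j
    simp [Equiv.image_symm_eq_preimage]
  rw [this, Set.ncard_image_of_injective _ σ.symm.injective]

theorem crossT_eq_crossT_tail {n : ℕ} (xs ms Ms : Fin (n + 1) → ℝ) (hx : xs 0 < x) :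
    crossT α β xs ms Ms x y = crossT α β (Fin.tail xs) (Fin.tail ms) (Fin.tail Ms) x y := by
  refine iInf_congr fun f => iInf_congr fun _ => ?_
  have : {i | x ≤ xs i ∧ f (xs i) ∈ Icc (ms i) (Ms i)} =
      Fin.succ '' {j | x ≤ Fin.tail xs j ∧
        f (Fin.tail xs j) ∈ Icc (Fin.tail ms j) (Fin.tail Ms j)} := by
    ext i
    refine Fin.cases ?_ (fun j => ?_) i
    · simp [hx.not_ge, Fin.succ_ne_zero]
    · simp [Fin.tail]
  rw [this, Set.ncard_image_of_injective _ (Fin.succ_injective n)]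

end Trajectories

namespace CrossingInequality

section Erosion

/-- For `c < 0` the window is empty and the erosion is `sInf ∅ = 0`. -/
noncomputable def erosion (c : ℝ) (h : ℝ → ℕ) (v : ℝ) : ℕ := sInf (h '' Icc v (v + c))

def erodedSet (c : ℝ) (S : Set ℝ) : Set ℝ := {z | Icc z (z + c) ⊆ S}

def widths (S : Set ℝ) : Set ℝ := {w | 0 ≤ w ∧ ∃ v, Icc v (v + w) ⊆ S}

variable {c : ℝ} {h : ℝ → ℕ} {S : Set ℝ}

theorem erosion_le {v u : ℝ} (hu : u ∈ Icc v (v + c)) : erosion c h v ≤ h u :=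
  Nat.sInf_le ⟨u, hu, rfl⟩

theorem exists_eq_erosion (hc : 0 ≤ c) (v : ℝ) : ∃ u ∈ Icc v (v + c), h u = erosion c h v :=
  Nat.sInf_mem (Set.image_nonempty.2 (nonempty_Icc.2 (by linarith)))

theorem erosion_of_neg (hc : c < 0) (v : ℝ) : erosion c h v = 0 := by
  simp [erosion, Icc_eq_empty (show ¬v ≤ v + c by linarith)]

theorem lt_erosion_iff (hc : 0 ≤ c) {k : ℕ} {v : ℝ} :
    k < erosion c h v ↔ v ∈ erodedSet c {u | k < h u} := by
  refine ⟨fun hk u hu => hk.trans_le (erosion_le hu), fun hv => ?_⟩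
  obtain ⟨u, hu, hequ⟩ := exists_eq_erosion (h := h) hc v
  exact hequ ▸ hv hu

theorem erodedSet_subset (hc : 0 ≤ c) : erodedSet c S ⊆ S :=
  fun z hz => hz ⟨le_rfl, by linarith⟩

theorem isClosed_erodedSet (hS : IsClosed S) : IsClosed (erodedSet c S) := by
  have : erodedSet c S = ⋂ u ∈ Icc 0 c, (· + u) ⁻¹' S := by
    ext z
    simp only [mem_iInter, mem_preimage]
    refine ⟨fun hz u hu => hz ⟨by linarith [hu.1], by linarith [hu.2]⟩, fun hz w hw => ?_⟩
    simpa using hz (w - z) ⟨by linarith [hw.1], by linarith [hw.2]⟩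
  rw [this]
  exact isClosed_biInter fun u _ => hS.preimage (by fun_prop)

theorem upperSemicontinuous_erosion (hh : UpperSemicontinuous h) (c : ℝ) :
    UpperSemicontinuous (erosion c h) := by
  rcases lt_or_ge c 0 with hc | hc
  · simpa [funext (erosion_of_neg (h := h) hc)] using upperSemicontinuous_const
  rw [upperSemicontinuous_iff_isClosed_preimage] at hh ⊢
  rintro (_ | k)
  · simp
  have : erosion c h ⁻¹' Ici (k + 1) = erodedSet c {u | k < h u} :=
    Set.ext fun _ => lt_erosion_iff hc
  exact this ▸ isClosed_erodedSet (hh (k + 1))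

theorem support_erosion_subset (c : ℝ) : Function.support (erosion c h) ⊆ Function.support h := by
  intro v hv
  rcases lt_or_ge c 0 with hc | hc
  · exact absurd (erosion_of_neg hc _) hv
  · exact ((Nat.pos_of_ne_zero hv).trans_le (erosion_le ⟨le_rfl, by linarith⟩)).ne'

theorem bddAbove_support_erosion_comp_add (hh : BddAbove (Function.support h)) (c s : ℝ) :
    BddAbove (Function.support fun v => erosion c h (v + s)) := by
  obtain ⟨b, hb⟩ := hh
  exact ⟨b - s, fun v hv => by linarith [hb (support_erosion_subset c hv)]⟩

theorem ordConnected_widths : (widths S).OrdConnected :=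
  ⟨fun _ ha _ ⟨_, v, hv⟩ _ hu =>
    ⟨ha.1.trans hu.1, v, (Icc_subset_Icc_right (by linarith [hu.2])).trans hv⟩⟩

noncomputable def widthProfile (h : ℝ → ℕ) (w : ℝ) : ℝ≥0∞ :=
  ∑' k : ℕ, (widths {v | k < h v}).indicator 1 w

theorem measurable_widthProfile : Measurable (widthProfile h) :=
  Measurable.tsum fun _ => measurable_one.indicator ordConnected_widths.measurableSet

theorem natCast_eq_tsum (m : ℕ) : (m : ℝ≥0∞) = ∑' k : ℕ, if k < m then 1 else 0 := by
  rw [tsum_eq_sum (s := Finset.range m) fun k hk => by simpa using hk,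
    Finset.sum_ite_of_true fun k hk => Finset.mem_range.1 hk]
  simp

theorem natCast_erosion_le_widthProfile (hc : 0 ≤ c) (v : ℝ) :
    (erosion c h v : ℝ≥0∞) ≤ widthProfile h c := by
  rw [natCast_eq_tsum]
  refine ENNReal.tsum_le_tsum fun k => ?_
  split_ifs with hk
  · rw [Set.indicator_of_mem (show c ∈ widths {u | k < h u} from
      ⟨hc, v, (lt_erosion_iff hc).1 hk⟩)]
    rfl
  · exact zero_le

end Erosion

section Volume

variable {c : ℝ} {S : Set ℝ}

/-- For `z` in an interval `J ⊆ S` of length `w ≤ c`, the first point of the orbit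
`z, z + c, z + 2c, …` whose successor leaves `S` lies in `S \ erodedSet c S`. These exit
points, for the various `z ∈ J`, are translates of disjoint pieces of `J`. -/
theorem volume_erodedSet_add_le (hS : IsClosed S) (hSb : BddAbove S) (hc : 0 < c) {w v : ℝ}
    (hw : w ≤ c) (hv : Icc v (v + w) ⊆ S) :
    volume (erodedSet c S) + ENNReal.ofReal w ≤ volume S := by
  set E := erodedSet c S
  set J := Ioo v (v + w)
  have hE : IsClosed E := isClosed_erodedSet hS
  set B : ℕ → Set ℝ := fun j => (S \ E) ∩ (fun z => z - j * c) ⁻¹' J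
  have hBm : ∀ j, MeasurableSet (B j) := fun j =>
    (hS.measurableSet.diff hE.measurableSet).inter (measurableSet_Ioo.preimage (by fun_prop))
  have hdisj : Pairwise (Function.onFun Disjoint B) := by
    refine (pairwise_disjoint_on B).2 fun j j' hjj' => Set.disjoint_left.2 fun z hz hz' => ?_
    have : (j : ℝ) + 1 ≤ j' := by exact_mod_cast hjj'
    obtain ⟨-, hz₁, hz₂⟩ := hz
    obtain ⟨-, hz₁', hz₂'⟩ := hz'
    nlinarith
  have hcover : J ⊆ ⋃ j : ℕ, (· + j * c) ⁻¹' B j := by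
    intro z hz
    obtain ⟨b, hb⟩ := hSb
    have hexit : ∃ j : ℕ, z + (j + 1) * c ∉ S := by
      obtain ⟨j, hj⟩ := exists_nat_gt ((b - z) / c)
      rw [div_lt_iff₀ hc] at hj
      exact ⟨j, fun hmem => by nlinarith [hb hmem]⟩
    classical
    have hmem : z + Nat.find hexit * c ∈ S := by
      rcases hj : Nat.find hexit with _ | j
      · simpa using hv (Ioo_subset_Icc_self hz)
      · simpa using Nat.find_min hexit (hj ▸ j.lt_succ_self)
    refine mem_iUnion.2 ⟨Nat.find hexit, ⟨hmem, fun hE' => ?_⟩, by simpa using hz⟩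
    exact Nat.find_spec hexit (hE' ⟨by linarith, by linarith⟩)
  have hJ : ENNReal.ofReal w ≤ volume (S \ E) := calc
    ENNReal.ofReal w = volume J := by simp [J, Real.volume_Ioo]
    _ ≤ volume (⋃ j : ℕ, (· + j * c) ⁻¹' B j) := measure_mono hcover
    _ ≤ ∑' j : ℕ, volume ((· + j * c) ⁻¹' B j) := measure_iUnion_le _
    _ = ∑' j, volume (B j) := by simp_rw [measure_preimage_add_right]
    _ = volume (⋃ j, B j) := (measure_iUnion hdisj hBm).symm
    _ ≤ volume (S \ E) := measure_mono (iUnion_subset fun _ => inter_subset_left)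
  calc volume E + ENNReal.ofReal w ≤ volume E + volume (S \ E) := by gcongr
    _ = volume S := by
      rw [measure_add_sdiff hE.measurableSet.nullMeasurableSet,
        union_eq_right.2 (erodedSet_subset hc.le)]

theorem volume_erodedSet_add_volume_widths_le (hS : IsClosed S) (hSb : BddAbove S) (hc : 0 ≤ c) :
    volume (erodedSet c S) + volume (widths S ∩ Ico 0 c) ≤ volume S := by
  set F := widths S ∩ Ico 0 c
  have hES : volume (erodedSet c S) ≤ volume S := measure_mono (erodedSet_subset hc)
  rcases eq_or_ne (volume S) ⊤ with hS' | hS'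
  · simp [hS']
  suffices volume F ≤ volume S - volume (erodedSet c S) by
    calc _ ≤ volume (erodedSet c S) + (volume S - volume (erodedSet c S)) := by gcongr
      _ = volume S := add_tsub_cancel_of_le hES
  have hne : volume S - volume (erodedSet c S) ≠ ⊤ := ne_top_of_le_ne_top hS' tsub_le_self
  -- `F` is an initial segment of `[0, c)`: its measure is its supremum, and each of its
  -- elements is paid for by `volume_erodedSet_add_le`.
  have hF : F ⊆ Icc 0 (sSup F) := fun w hw =>
    ⟨hw.2.1, le_csSup ⟨c, fun w' hw' => hw'.2.2.le⟩ hw⟩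
  calc volume F ≤ volume (Icc 0 (sSup F)) := measure_mono hF
    _ = ENNReal.ofReal (sSup F) := by simp [Real.volume_Icc]
    _ ≤ _ := by
      rw [ENNReal.ofReal_le_iff_le_toReal hne]
      refine Real.sSup_le (fun w ⟨⟨_, v, hv⟩, hw0, hwc⟩ => ?_) ENNReal.toReal_nonneg
      rw [← ENNReal.ofReal_le_iff_le_toReal hne]
      exact ENNReal.le_sub_of_add_le_left (ne_top_of_le_ne_top hS' hES)
        (volume_erodedSet_add_le hS hSb (hw0.trans_lt hwc) hwc.le hv)

theorem lintegral_natCast_eq_tsum {X : Type*} [MeasurableSpace X] {μ : Measure X} {h : X → ℕ}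
    (hh : Measurable h) : ∫⁻ a, (h a : ℝ≥0∞) ∂μ = ∑' k : ℕ, μ {a | k < h a} := by
  simp_rw [natCast_eq_tsum]
  rw [lintegral_tsum fun k => (measurable_const.ite (measurableSet_lt measurable_const hh)
    measurable_const).aemeasurable]
  congr with k
  rw [← lintegral_indicator_one (measurableSet_lt measurable_const hh)]
  simp [Set.indicator_apply]

theorem setLIntegral_widthProfile (h : ℝ → ℕ) (s : Set ℝ) :
    ∫⁻ w in s, widthProfile h w = ∑' k : ℕ, volume (widths {v | k < h v} ∩ s) := by
  unfold widthProfile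
  rw [lintegral_tsum fun k =>
    (measurable_one.indicator ordConnected_widths.measurableSet).aemeasurable]
  congr with k
  rw [lintegral_indicator_one ordConnected_widths.measurableSet, Measure.restrict_apply
    ordConnected_widths.measurableSet]

theorem lintegral_erosion_add_setLIntegral_widthProfile_le {h : ℝ → ℕ}
    (hh : UpperSemicontinuous h) (hhb : BddAbove (Function.support h)) (hc : 0 ≤ c) (s : ℝ) :
    (∫⁻ v, (erosion c h (v + s) : ℝ≥0∞)) + ∫⁻ w in Ico 0 c, widthProfile h w ≤
      ∫⁻ v, (h v : ℝ≥0∞) := by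
  rw [lintegral_add_right_eq_self (fun v => (erosion c h v : ℝ≥0∞)) s,
    lintegral_natCast_eq_tsum (upperSemicontinuous_erosion hh c).measurable,
    lintegral_natCast_eq_tsum hh.measurable, setLIntegral_widthProfile h (Ico 0 c),
    ← ENNReal.tsum_add]
  refine ENNReal.tsum_le_tsum fun k => ?_
  rw [show {v | k < erosion c h v} = erodedSet c {u | k < h u} from
    Set.ext fun _ => lt_erosion_iff hc]
  exact volume_erodedSet_add_volume_widths_le
    (upperSemicontinuous_iff_isClosed_preimage.1 hh (k + 1))
    (hhb.mono fun u hu => ((Nat.zero_le k).trans_lt hu).ne') hc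

end Volume

theorem ofReal_mul_setLIntegral_Ioc_comp {φ : ℝ → ℝ≥0∞} (hφ : Measurable φ) {c : ℝ} (hc : 0 < c)
    (a b : ℝ) :
    ENNReal.ofReal c * ∫⁻ x in Ioc a b, φ (c * (b - x)) = ∫⁻ w in Ico 0 (c * (b - a)), φ w := by
  set g : ℝ → ℝ := fun x => c * (b - x)
  have hmap : Measure.map g volume = ENNReal.ofReal c⁻¹ • volume := by
    have : g = (c * b + ·) ∘ ((-c) * ·) := by ext x; simp [g]; ring
    rw [this, ← Measure.map_map (by fun_prop) (by fun_prop),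
      Real.map_volume_mul_left (neg_ne_zero.2 hc.ne'), Measure.map_smul, map_add_left_eq_self,
      inv_neg, abs_neg, abs_of_pos (inv_pos.2 hc)]
  have hpre : Ioc a b = g ⁻¹' Ico 0 (c * (b - a)) := by
    ext x
    simp only [mem_Ioc, mem_preimage, mem_Ico, g]
    constructor
    · rintro ⟨h₁, h₂⟩; constructor <;> nlinarith
    · rintro ⟨h₁, h₂⟩; constructor <;> nlinarith
  rw [hpre, ← setLIntegral_map measurableSet_Ico hφ (by fun_prop), hmap, Measure.restrict_smul,
    lintegral_smul_measure, smul_eq_mul, ← mul_assoc, ← ENNReal.ofReal_mul hc.le,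
    mul_inv_cancel₀ hc.ne', ENNReal.ofReal_one, one_mul]

section Cost

variable {α β : ℝ} {n : ℕ}

/-- A bound on the number of gates crossed from `(p, v)` when the gates lie to the right of `p`,
sorted from left to right: a trajectory can reach any height in `[v + α d, v + β d]` at the
first gate, `d = xs 0 - p`, and `headCost` is the cost from there on. -/
noncomputable def dpCost (α β : ℝ) : {n : ℕ} → (xs ms Ms : Fin n → ℝ) → ℝ → ℝ → ℕ
  | 0, _, _, _, _, _ => 0
  | _ + 1, xs, ms, Ms, p, v =>
    erosion ((β - α) * (xs 0 - p))
      (fun u => (Icc (ms 0) (Ms 0)).indicator 1 u +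
        dpCost α β (Fin.tail xs) (Fin.tail ms) (Fin.tail Ms) (xs 0) u)
      (v + α * (xs 0 - p))

noncomputable def headCost (α β : ℝ) (xs ms Ms : Fin (n + 1) → ℝ) (u : ℝ) : ℕ :=
  (Icc (ms 0) (Ms 0)).indicator 1 u + dpCost α β (Fin.tail xs) (Fin.tail ms) (Fin.tail Ms) (xs 0) u

theorem upperSemicontinuous_dpCost :
    ∀ {n : ℕ} (xs ms Ms : Fin n → ℝ) (p : ℝ), UpperSemicontinuous (dpCost α β xs ms Ms p)
  | 0, _, _, _, _ => upperSemicontinuous_const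
  | _ + 1, _, _, _, _ =>
    (upperSemicontinuous_erosion ((isClosed_Icc.upperSemicontinuous_indicator zero_le_one).add
      (upperSemicontinuous_dpCost _ _ _ _)) _).comp (continuous_add_const _)

theorem upperSemicontinuous_headCost (xs ms Ms : Fin (n + 1) → ℝ) :
    UpperSemicontinuous (headCost α β xs ms Ms) :=
  (isClosed_Icc.upperSemicontinuous_indicator zero_le_one).add (upperSemicontinuous_dpCost _ _ _ _)

theorem bddAbove_support_indicator_add {m M : ℝ} {g : ℝ → ℕ} (hg : BddAbove (Function.support g)) :
    BddAbove (Function.support fun u => (Icc m M).indicator 1 u + g u) :=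
  (bddAbove_Icc.union hg).mono
    ((Function.support_add _ _).trans (union_subset_union_left _ Set.support_indicator_subset))

theorem bddAbove_support_dpCost :
    ∀ {n : ℕ} (xs ms Ms : Fin n → ℝ) (p : ℝ), BddAbove (Function.support (dpCost α β xs ms Ms p))
  | 0, _, _, _, _ => by simp [dpCost]
  | _ + 1, _, _, _, _ => bddAbove_support_erosion_comp_add
    (bddAbove_support_indicator_add (bddAbove_support_dpCost _ _ _ _)) _ _

theorem bddAbove_support_headCost (xs ms Ms : Fin (n + 1) → ℝ) :
    BddAbove (Function.support (headCost α β xs ms Ms)) :=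
  bddAbove_support_indicator_add (bddAbove_support_dpCost _ _ _ _)

theorem lintegral_headCost (xs ms Ms : Fin (n + 1) → ℝ) :
    ∫⁻ u, (headCost α β xs ms Ms u : ℝ≥0∞) = ENNReal.ofReal (Ms 0 - ms 0) +
      ∫⁻ u, (dpCost α β (Fin.tail xs) (Fin.tail ms) (Fin.tail Ms) (xs 0) u : ℝ≥0∞) := by
  have hind : (fun u => (((Icc (ms 0) (Ms 0)).indicator 1 u : ℕ) : ℝ≥0∞)) =
      (Icc (ms 0) (Ms 0)).indicator 1 := by
    ext u
    by_cases hu : u ∈ Icc (ms 0) (Ms 0) <;> simp [hu]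
  simp only [headCost, Nat.cast_add]
  rw [lintegral_add_left (by rw [hind]; exact measurable_one.indicator measurableSet_Icc), hind,
    lintegral_indicator_one measurableSet_Icc, Real.volume_Icc]

end Cost

section Crossings

variable {α β : ℝ} {n : ℕ}

noncomputable def crossings (xs ms Ms : Fin n → ℝ) (f : ℝ → ℝ) : ℕ :=
  ∑ i, (Icc (ms i) (Ms i)).indicator 1 (f (xs i))

theorem ncard_eq_crossings {xs ms Ms : Fin n → ℝ} {f : ℝ → ℝ} {x : ℝ} (hx : ∀ i, x ≤ xs i) :
    {i | x ≤ xs i ∧ f (xs i) ∈ Icc (ms i) (Ms i)}.ncard = crossings xs ms Ms f := by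
  classical
  simp only [hx, true_and, Set.ncard_eq_toFinset_card', Set.toFinset_ofPred, Finset.card_filter,
    crossings, Set.indicator_apply, Pi.one_apply]

theorem exists_isTraj_crossings_le (hαβ : α ≤ β) :
    ∀ {n : ℕ} (xs ms Ms : Fin n → ℝ), Monotone xs → ∀ x y : ℝ, (∀ i, x ≤ xs i) →
      ∃ f, IsTraj α β x y f ∧ crossings xs ms Ms f ≤ dpCost α β xs ms Ms x y
  | 0, _, _, _, _, x, y, _ => by
    obtain ⟨f, hf, -⟩ := exists_isTraj_apply_eq (x := x) (y := y) (p := x) (u := y) hαβ (by simp)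
    exact ⟨f, hf, by simp [crossings]⟩
  | _ + 1, xs, ms, Ms, hmono, x, y, hx => by
    obtain ⟨u, hu, hWu⟩ := exists_eq_erosion (h := headCost α β xs ms Ms)
      (mul_nonneg (sub_nonneg.2 hαβ) (sub_nonneg.2 (hx 0))) (y + α * (xs 0 - x))
    obtain ⟨f₁, hf₁, hf₁u⟩ := exists_isTraj_apply_eq hαβ hu
    obtain ⟨f₂, hf₂, hcount⟩ := exists_isTraj_crossings_le hαβ (Fin.tail xs) (Fin.tail ms)
      (Fin.tail Ms) (fun i j hij => hmono (Fin.succ_le_succ_iff.2 hij)) (xs 0) u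
      (fun i => hmono (Fin.zero_le _))
    refine ⟨_, hf₁.piecewise (hx 0) (hf₁u ▸ hf₂), ?_⟩
    have hagree : ∀ i, (if xs i < xs 0 then f₁ (xs i) else f₂ (xs i)) = f₂ (xs i) :=
      fun i => if_neg (not_lt.2 (hmono (Fin.zero_le i)))
    calc crossings xs ms Ms (fun s => if s < xs 0 then f₁ s else f₂ s)
        = crossings xs ms Ms f₂ := by simp only [crossings, hagree]
      _ = (Icc (ms 0) (Ms 0)).indicator 1 u +
          crossings (Fin.tail xs) (Fin.tail ms) (Fin.tail Ms) f₂ := by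
        rw [crossings, Fin.sum_univ_succ, hf₂.1]; rfl
      _ ≤ headCost α β xs ms Ms u := Nat.add_le_add_left hcount _
      _ = dpCost α β xs ms Ms x y := hWu

theorem crossT_le_dpCost (hαβ : α ≤ β) {xs : Fin n → ℝ} (hmono : Monotone xs) (ms Ms : Fin n → ℝ)
    {x : ℝ} (hx : ∀ i, x ≤ xs i) (y : ℝ) :
    crossT α β xs ms Ms x y ≤ dpCost α β xs ms Ms x y := by
  obtain ⟨f, hf, hcount⟩ := exists_isTraj_crossings_le hαβ xs ms Ms hmono x y hx
  calc crossT α β xs ms Ms x y ≤ crossings xs ms Ms f := by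
        rw [← ncard_eq_crossings hx]; exact crossT_le_of_isTraj hf
    _ ≤ dpCost α β xs ms Ms x y := by exact_mod_cast hcount

theorem iSup_crossT_le_widthProfile (hαβ : α ≤ β) {xs : Fin (n + 1) → ℝ} (hmono : Monotone xs)
    (ms Ms : Fin (n + 1) → ℝ) {x : ℝ} (hx : x ≤ xs 0) :
    ⨆ y, crossT α β xs ms Ms x y ≤ widthProfile (headCost α β xs ms Ms) ((β - α) * (xs 0 - x)) :=
  iSup_le fun y =>
    (crossT_le_dpCost hαβ hmono ms Ms (fun i => hx.trans (hmono (Fin.zero_le i))) y).trans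
    (natCast_erosion_le_widthProfile (mul_nonneg (sub_nonneg.2 hαβ) (sub_nonneg.2 hx)) _)

/-- The extra term `∫ dpCost … p` is what makes the bound survive adding a gate on the left. -/
theorem ofReal_mul_setLIntegral_Ioi_add_lintegral_dpCost_le (hαβ : α < β) :
    ∀ {n : ℕ} (xs ms Ms : Fin n → ℝ), Monotone xs → ∀ p : ℝ, (∀ i, p ≤ xs i) →
      ENNReal.ofReal (β - α) * (∫⁻ x in Ioi p, ⨆ y, crossT α β xs ms Ms x y) +
        ∫⁻ v, (dpCost α β xs ms Ms p v : ℝ≥0∞) ≤ ∑ i, ENNReal.ofReal (Ms i - ms i)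
  | 0, xs, ms, Ms, hmono, p, _ => by
    have hzero : ∀ x y, crossT α β xs ms Ms x y = 0 := fun x y =>
      nonpos_iff_eq_zero.1 ((crossT_le_dpCost hαβ.le hmono ms Ms (x := x) (fun i => i.elim0)
        y).trans_eq (by simp [dpCost]))
    simp [hzero, dpCost]
  | _ + 1, xs, ms, Ms, hmono, p, hp => by
    have hL : 0 ≤ (β - α) * (xs 0 - p) := mul_nonneg (sub_nonneg.2 hαβ.le) (sub_nonneg.2 (hp 0))
    have hslab : ENNReal.ofReal (β - α) * ∫⁻ x in Ioc p (xs 0), ⨆ y, crossT α β xs ms Ms x y ≤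
        ∫⁻ w in Ico 0 ((β - α) * (xs 0 - p)), widthProfile (headCost α β xs ms Ms) w := by
      rw [← ofReal_mul_setLIntegral_Ioc_comp measurable_widthProfile (sub_pos.2 hαβ)]
      exact mul_le_mul_right (setLIntegral_mono' measurableSet_Ioc fun x hx =>
        iSup_crossT_le_widthProfile hαβ.le hmono ms Ms hx.2) _
    have hright : ∫⁻ x in Ioi (xs 0), ⨆ y, crossT α β xs ms Ms x y =
        ∫⁻ x in Ioi (xs 0), ⨆ y, crossT α β (Fin.tail xs) (Fin.tail ms) (Fin.tail Ms) x y :=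
      setLIntegral_congr_fun measurableSet_Ioi fun x hx =>
        iSup_congr fun y => crossT_eq_crossT_tail xs ms Ms hx
    have hIH := ofReal_mul_setLIntegral_Ioi_add_lintegral_dpCost_le hαβ (Fin.tail xs) (Fin.tail ms)
      (Fin.tail Ms) (fun i j hij => hmono (Fin.succ_le_succ_iff.2 hij)) (xs 0)
      (fun i => hmono (Fin.zero_le _))
    rw [← Ioc_union_Ioi_eq_Ioi (hp 0), lintegral_union measurableSet_Ioi Ioc_disjoint_Ioi_same,
      hright, mul_add, Fin.sum_univ_succ]
    set k := ENNReal.ofReal (β - α)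
    set A := ∫⁻ x in Ioc p (xs 0), ⨆ y, crossT α β xs ms Ms x y
    set B := ∫⁻ x in Ioi (xs 0), ⨆ y, crossT α β (Fin.tail xs) (Fin.tail ms) (Fin.tail Ms) x y
    set I := ∫⁻ w in Ico 0 ((β - α) * (xs 0 - p)), widthProfile (headCost α β xs ms Ms) w
    set D := ∫⁻ v, (dpCost α β xs ms Ms p v : ℝ≥0∞)
    set D' := ∫⁻ v, (dpCost α β (Fin.tail xs) (Fin.tail ms) (Fin.tail Ms) (xs 0) v : ℝ≥0∞)
    have herode : D + I ≤ ENNReal.ofReal (Ms 0 - ms 0) + D' :=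
      (lintegral_erosion_add_setLIntegral_widthProfile_le (upperSemicontinuous_headCost xs ms Ms)
        (bddAbove_support_headCost xs ms Ms) hL (α * (xs 0 - p))).trans_eq
        (lintegral_headCost xs ms Ms)
    calc k * A + k * B + D ≤ I + k * B + D := by gcongr
      _ = (D + I) + k * B := by ring
      _ ≤ (ENNReal.ofReal (Ms 0 - ms 0) + D') + k * B := by gcongr
      _ = ENNReal.ofReal (Ms 0 - ms 0) + (k * B + D') := by ring
      _ ≤ _ := by gcongr; exact hIH

end Crossings

theorem lintegral_iSup_crossT_le_of_monotone {α β : ℝ} (hαβ : α < β) {n : ℕ}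
    {xs : Fin n → ℝ} (hmono : Monotone xs) (ms Ms : Fin n → ℝ) :
    ∫⁻ x, ⨆ y, crossT α β xs ms Ms x y ≤
      ENNReal.ofReal (β - α)⁻¹ * ∑ i, ENNReal.ofReal (Ms i - ms i) := by
  obtain ⟨b, hb⟩ := Finite.bddBelow_range xs
  have hcover : (⋃ k : ℕ, Ioi (b - k)) = univ := iUnion_eq_univ_iff.2 fun x => by
    obtain ⟨k, hk⟩ := exists_nat_gt (b - x)
    exact ⟨k, by simp only [mem_Ioi]; linarith⟩
  rw [← setLIntegral_univ, ← hcover, setLIntegral_iUnion_of_directed _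
    (Monotone.directed_le fun k k' hkk' => Ioi_subset_Ioi (by gcongr))]
  refine iSup_le fun k => ?_
  have := le_self_add.trans (ofReal_mul_setLIntegral_Ioi_add_lintegral_dpCost_le hαβ xs ms Ms hmono
    (b - k) fun i => (sub_le_self _ k.cast_nonneg).trans (hb (mem_range_self i)))
  rwa [ENNReal.ofReal_inv_of_pos (sub_pos.2 hαβ), ← ENNReal.div_eq_inv_mul,
    ENNReal.le_div_iff_mul_le (Or.inl (by simpa using hαβ)) (Or.inl ENNReal.ofReal_ne_top),
    mul_comm]

end CrossingInequality

/-- Crossing inequality for finitely many gates: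
`∫ T(x) dx ≤ (1/(β-α)) ∑ᵢ (Mᵢ - mᵢ)` where `T x = sup_y t(x,y)`. -/
theorem crossing_inequality (α β : ℝ) (hαβ : α < β) {n : ℕ} (xs ms Ms : Fin n → ℝ)
    (hm : ∀ i, ms i ≤ Ms i) :
    ∫⁻ x : ℝ, (⨆ y : ℝ, crossT α β xs ms Ms x y)
      ≤ ENNReal.ofReal ((β - α)⁻¹ * ∑ i : Fin n, (Ms i - ms i)) := by
  set σ := Tuple.sort xs
  simp_rw [← crossT_comp_perm xs ms Ms σ]
  calc _ ≤ ENNReal.ofReal (β - α)⁻¹ * ∑ i, ENNReal.ofReal (Ms (σ i) - ms (σ i)) :=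
        CrossingInequality.lintegral_iSup_crossT_le_of_monotone hαβ (Tuple.monotone_sort xs) _ _
    _ = _ := by
      rw [Equiv.sum_comp σ (fun i => ENNReal.ofReal (Ms i - ms i)),
        ENNReal.ofReal_mul (inv_nonneg.2 (sub_pos.2 hαβ).le),
        ENNReal.ofReal_sum_of_nonneg fun i _ => sub_nonneg.2 (hm i)]
end

section
/- Reduction of a slanted gate to a vertical gate: let α < β and let AB be a segment from A = (x₁, y₁) to B = (x₂, y₂) with x₁ < x₂. Any trajectory with slopes in [α, β] that starts at or to the left of x₁ and intersects segment AB must also cross the vertical segment at x₂ of length τ_{α,β}((y₂-y₁)/(x₂-x₁))·(x₂-x₁), where τ_{α,β}(s) = s - α if s ≥ β, τ_{α,β}(s) = β - α if α ≤ s ≤ β, and τ_{α,β}(s) = β - s if s ≤ α, the vertical segment being appropriately placed at the endpoint of AB. -/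
open Set

/-- The function `τ_{α,β}` : `s - α` for `s ≥ β`, `β - α` for `α ≤ s ≤ β`, `β - s` for `s ≤ α`. -/
noncomputable def tau (α β s : ℝ) : ℝ :=
  if β ≤ s then s - α else if s ≤ α then β - s else β - α

/-!
The gate is `[y₁ + min s α · d, y₁ + max β s · d]` with `s` the slope of `AB` and `d = x₂ - x₁`,
so its length is `(max β s - min s α) · d = τ_{α,β}(s) · d`. If the trajectory meets `AB` at
abscissa `u`, the broken path `A → (u, f u) → (x₂, f x₂)` consists of a piece of slope `s` over
`[x₁, u]` followed by a piece of slope in `[α, β]` over `[u, x₂]`; both slopes lie in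
`[min s α, max β s]`, which bounds `f x₂ - y₁` by those slopes times `d`.
-/

theorem tau_eq_max_sub_min {α β : ℝ} (hαβ : α < β) (s : ℝ) : tau α β s = max β s - min s α := by
  unfold tau
  split_ifs with hβ hα
  · rw [max_eq_right hβ, min_eq_right (by linarith)]
  · rw [max_eq_left (by linarith), min_eq_left hα]
  · rw [max_eq_left (by linarith), min_eq_right (by linarith)]

namespace IsTraj

variable {α β x y x₁ y₁ x₂ s u : ℝ} {f : ℝ → ℝ}

theorem add_min_mul_le (hf : IsTraj α β x y f) (hx : x ≤ x₁) (hu : u ∈ Icc x₁ x₂)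
    (hfu : f u = y₁ + s * (u - x₁)) : y₁ + min s α * (x₂ - x₁) ≤ f x₂ := by
  have hstep := (hf.2 u x₂ (hx.trans hu.1) hu.2).1
  have hsegment : min s α * (u - x₁) ≤ s * (u - x₁) :=
    mul_le_mul_of_nonneg_right (min_le_left s α) (sub_nonneg.2 hu.1)
  have htraj : min s α * (x₂ - u) ≤ α * (x₂ - u) :=
    mul_le_mul_of_nonneg_right (min_le_right s α) (sub_nonneg.2 hu.2)
  linarith

theorem le_add_max_mul (hf : IsTraj α β x y f) (hx : x ≤ x₁) (hu : u ∈ Icc x₁ x₂)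
    (hfu : f u = y₁ + s * (u - x₁)) : f x₂ ≤ y₁ + max β s * (x₂ - x₁) := by
  have hstep := (hf.2 u x₂ (hx.trans hu.1) hu.2).2
  have hsegment : s * (u - x₁) ≤ max β s * (u - x₁) :=
    mul_le_mul_of_nonneg_right (le_max_right β s) (sub_nonneg.2 hu.1)
  have htraj : β * (x₂ - u) ≤ max β s * (x₂ - u) :=
    mul_le_mul_of_nonneg_right (le_max_left β s) (sub_nonneg.2 hu.2)
  linarith

end IsTraj

/-- Reduction of a slanted gate to a vertical gate: a trajectory with slopes in `[α, β]`
starting at or to the left of `x₁` that intersects the segment from `(x₁, y₁)` to `(x₂, y₂)`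
must cross the vertical segment at `x₂` (appropriately placed at an endpoint of the segment)
of length `τ_{α,β}((y₂-y₁)/(x₂-x₁)) · (x₂-x₁)`. -/
theorem slanted_gate_to_vertical (α β x y x₁ y₁ x₂ y₂ : ℝ) (hαβ : α < β) (h12 : x₁ < x₂)
    (hx : x ≤ x₁) (f : ℝ → ℝ) (hf : IsTraj α β x y f)
    (hit : ∃ u ∈ Icc x₁ x₂, f u = y₁ + (y₂ - y₁) / (x₂ - x₁) * (u - x₁)) :
    f x₂ ∈ Icc (if (y₂ - y₁) / (x₂ - x₁) ≤ α then y₂ else y₁ + α * (x₂ - x₁))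
               (if β ≤ (y₂ - y₁) / (x₂ - x₁) then y₂ else y₁ + β * (x₂ - x₁)) ∧
    (if β ≤ (y₂ - y₁) / (x₂ - x₁) then y₂ else y₁ + β * (x₂ - x₁)) -
      (if (y₂ - y₁) / (x₂ - x₁) ≤ α then y₂ else y₁ + α * (x₂ - x₁))
      = tau α β ((y₂ - y₁) / (x₂ - x₁)) * (x₂ - x₁) := by
  obtain ⟨u, hu, hfu⟩ := hit
  set s := (y₂ - y₁) / (x₂ - x₁)
  have hy₂ : y₂ = y₁ + s * (x₂ - x₁) := by
    rw [div_mul_cancel₀ _ (sub_ne_zero.2 h12.ne')]; ring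
  have hlow : (if s ≤ α then y₂ else y₁ + α * (x₂ - x₁)) = y₁ + min s α * (x₂ - x₁) := by
    rw [min_def, hy₂]; split_ifs <;> rfl
  have hhigh : (if β ≤ s then y₂ else y₁ + β * (x₂ - x₁)) = y₁ + max β s * (x₂ - x₁) := by
    rw [max_def, hy₂]; split_ifs <;> rfl
  rw [hlow, hhigh, tau_eq_max_sub_min hαβ]
  exact ⟨⟨hf.add_min_mul_le hx hu hfu, hf.le_add_max_mul hx hu hfu⟩, by ring⟩
end

section
/- If (a_n) and (b_n) are increasing computable sequences of rationals converging to A and B respectively, and for every ε > 0 there exists n with A - a_n < ε(B - b_n), then A is not Martin-Löf random. -/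
open Filter MeasureTheory
open scoped ENNReal

/-- The open rational interval coded by an optional pair of rationals. -/
def intervalOf : Option (ℚ × ℚ) → Set ℝ
  | none => ∅
  | some (p, q) => Set.Ioo (p : ℝ) (q : ℝ)

/-- A Martin-Löf test: a uniformly computable enumeration `W` of rational intervals such
that the `k`-th open set `⋃ i, intervalOf (W k i)` has Lebesgue measure at most `2⁻ᵏ`. -/
def MLTest (W : ℕ → ℕ → Option (ℚ × ℚ)) : Prop :=
  Computable₂ W ∧ ∀ k, volume (⋃ i, intervalOf (W k i)) ≤ (2 : ℝ≥0∞)⁻¹ ^ k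

/-- A real is Martin-Löf random if it is not covered by any Martin-Löf test. -/
def MLRandom (A : ℝ) : Prop :=
  ∀ W : ℕ → ℕ → Option (ℚ × ℚ), MLTest W → ∃ k, A ∉ ⋃ i, intervalOf (W k i)

/-!
Fix a rational `ε > 0` and give the step from `b s` to `b (s + 1)` a counterpart: the open
interval of radius `ε (b (s + 1) - b s)` around a centre `c s`, where `c 0 = a 0` and
`c (s + 1) = max (c s + ε (b (s + 1) - b s)) (a (s + 1))`. These intervals are computable from
`a`, `b`, `ε`, and their total length is at most `2 ε (B - b 0)`. If `A` escaped all of them,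
then inductively `c s ≤ A` and `c s - ε b s` is monotone, so letting `s → ∞` gives
`a n + ε (B - b n) ≤ c n + ε (B - b n) ≤ A` for every `n`, contradicting the hypothesis.
Choosing `ε = 1 / (2 ^ (k + 1) M)` with `M > B - b 0` gives a Martin-Löf test covering `A`.
-/

open Encodable

theorem Int.encode_eq (z : ℤ) :
    encode z = if 0 ≤ z then 2 * z.toNat else 2 * z.natAbs - 1 := by
  rcases z with n | n
  · exact (if_pos (Int.natCast_nonneg n)).symm
  · rw [if_neg (Int.negSucc_lt_zero n).not_ge]
    exact (Nat.add_sub_cancel (2 * n + 1) 1).symm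

def Nat.euclidStep (p : ℕ × ℕ) : ℕ × ℕ := if p.1 = 0 then p else (p.2 % p.1, p.1)

theorem Nat.euclidStep_iterate (a b : ℕ) {k : ℕ} (hk : a < k) :
    euclidStep^[k] (a, b) = (0, Nat.gcd a b) := by
  induction a using Nat.strong_induction_on generalizing b k with
  | _ a ih =>
    obtain ⟨k, rfl⟩ := Nat.exists_eq_add_of_lt hk
    rcases Nat.eq_zero_or_pos a with rfl | ha
    · have hfix : euclidStep (0, b) = (0, b) := if_pos rfl
      rw [Function.iterate_fixed hfix, Nat.gcd_zero_left]
    · have hmod := Nat.mod_lt b ha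
      rw [Function.iterate_succ_apply, show euclidStep (a, b) = (b % a, a) from if_neg ha.ne',
        ih _ hmod a (hmod.trans_le (Nat.le_add_right a k)), ← Nat.gcd_rec]

namespace Primrec

theorem int_toNat : Primrec Int.toNat := by
  refine (Primrec.ite (Primrec.eq.comp (nat_mod.comp .id (const 2)) (const 0))
    (nat_div.comp .id (const 2)) (const 0) |>.comp Primrec.encode).of_eq fun z => ?_
  simp only [id_eq, Int.encode_eq]
  split_ifs <;> omega

theorem int_natAbs : Primrec Int.natAbs := by
  refine (nat_div.comp (succ.comp .id) (const 2) |>.comp Primrec.encode).of_eq fun z => ?_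
  simp only [id_eq, Nat.succ_eq_add_one, Int.encode_eq]
  split_ifs <;> omega

theorem int_natCast_sub : Primrec₂ fun m n : ℕ => (m - n : ℤ) := by
  refine encode_iff.mp ((Primrec.ite nat_le.swap (nat_mul.comp (const 2) (nat_sub.comp fst snd))
    (nat_sub.comp (nat_mul.comp (const 2) (nat_sub.comp snd fst)) (const 1))).of_eq fun p => ?_)
  simp only [Int.encode_eq, Function.swap]
  split_ifs <;> omega

-- Arithmetic on `ℤ` reduces to `ℕ` through `z = z.toNat - (-z).toNat`.
theorem int_toNat_neg : Primrec fun z : ℤ => (-z).toNat :=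
  (nat_sub.comp int_natAbs int_toNat).of_eq fun z => by omega

theorem int_natCast : Primrec (Nat.cast : ℕ → ℤ) :=
  (int_natCast_sub.comp .id (const 0)).of_eq fun n => by simp

theorem int_neg : Primrec (Neg.neg : ℤ → ℤ) :=
  (int_natCast_sub.comp int_toNat_neg int_toNat).of_eq fun z => by omega

theorem int_add : Primrec₂ ((· + ·) : ℤ → ℤ → ℤ) :=
  (int_natCast_sub.comp (nat_add.comp (int_toNat.comp fst) (int_toNat.comp snd))
    (nat_add.comp (int_toNat_neg.comp fst) (int_toNat_neg.comp snd))).of_eq fun p => by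
      push_cast; omega

theorem int_mul : Primrec₂ ((· * ·) : ℤ → ℤ → ℤ) :=
  (int_natCast_sub.comp
    (nat_add.comp (nat_mul.comp (int_toNat.comp fst) (int_toNat.comp snd))
      (nat_mul.comp (int_toNat_neg.comp fst) (int_toNat_neg.comp snd)))
    (nat_add.comp (nat_mul.comp (int_toNat.comp fst) (int_toNat_neg.comp snd))
      (nat_mul.comp (int_toNat_neg.comp fst) (int_toNat.comp snd)))).of_eq fun p => by
    push_cast
    linear_combination ((p.2.toNat : ℤ) - (-p.2).toNat) * Int.toNat_sub_toNat_neg p.1 +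
      p.1 * Int.toNat_sub_toNat_neg p.2

theorem int_le : PrimrecRel ((· ≤ ·) : ℤ → ℤ → Prop) :=
  (nat_le.comp (nat_add.comp (int_toNat.comp fst) (int_toNat_neg.comp snd))
    (nat_add.comp (int_toNat.comp snd) (int_toNat_neg.comp fst))).of_eq fun p => by omega

theorem nat_gcd : Primrec₂ Nat.gcd := by
  have hstep : Primrec Nat.euclidStep :=
    Primrec.ite (Primrec.eq.comp fst (const 0)) .id ((nat_mod.comp snd fst).pair fst)
  exact (snd.comp (nat_iterate (succ.comp fst) .id (hstep.comp snd).to₂)).of_eq fun ⟨a, b⟩ =>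
    congrArg Prod.snd (Nat.euclidStep_iterate a b (Nat.lt_succ_self a))

end Primrec

namespace Computable

variable {α β : Type*} [Primcodable α]

theorem nat_find {p : α → ℕ → Prop} [∀ a, DecidablePred (p a)]
    (hp : Computable₂ fun a n => decide (p a n)) (h : ∀ a, ∃ n, p a n) :
    Computable fun a => Nat.find (h a) :=
  (Partrec.rfind hp.partrec₂).of_eq_tot fun a => Nat.mem_rfind.mpr
    ⟨by simpa using Nat.find_spec (h a), fun hm => by simpa using Nat.find_min (h a) hm⟩

theorem nat_subtype_ofNat {s : Set ℕ} [DecidablePred (· ∈ s)] [Infinite s]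
    (hs : Computable fun n => decide (n ∈ s)) :
    Computable fun n => (Nat.Subtype.ofNat s n : ℕ) := by
  have hnext (x : ℕ) : ∃ m, x + m + 1 ∈ s := by
    obtain ⟨y, hy, hxy⟩ := (Set.infinite_coe_iff.mp ‹_›).exists_gt x
    exact ⟨y - x - 1, by rwa [show x + (y - x - 1) + 1 = y by omega]⟩
  have hfind : Computable fun x => Nat.find (hnext x) :=
    nat_find (hs.comp (succ.comp (Primrec.nat_add.to_comp.comp fst snd))).to₂ hnext
  have hsucc : Computable₂ fun (_ : ℕ) (p : ℕ × ℕ) => p.2 + Nat.find (hnext p.2) + 1 :=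
    (succ.comp (Primrec.nat_add.to_comp.comp (snd.comp snd) (hfind.comp (snd.comp snd)))).to₂
  refine (nat_rec .id (const (Nat.Subtype.ofNat s 0 : ℕ)) hsucc).of_eq fun n => ?_
  induction n with
  | zero => rfl
  | succ n ih => simp only [id_eq] at ih ⊢; rw [ih]; rfl

theorem of_graph [Denumerable β] {f : α → β} {p : α → β → Bool} (hp : Computable₂ p)
    (hf : ∀ a b, p a b = true ↔ f a = b) : Computable f := by
  have h (a : α) : ∃ n, p a (Denumerable.ofNat β n) = true :=
    ⟨encode (f a), (hf _ _).mpr (Denumerable.ofNat_encode _).symm⟩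
  have hsearch : Computable₂ fun a n => decide (p a (Denumerable.ofNat β n) = true) := by
    simpa using (hp.comp fst ((Computable.ofNat β).comp snd)).to₂
  exact ((Computable.ofNat β).comp (nat_find hsearch h)).of_eq fun a =>
    ((hf _ _).mp (Nat.find_spec (h a))).symm

end Computable

/-- The code of `Rat.instEncodable`. The `Primcodable ℚ` instance does not use it: it comes from
`Denumerable.ofEncodableOfInfinite`, which numbers rationals by the rank of this code in its
range. -/
abbrev Rat.pairCode : ℚ → ℕ := @encode ℚ Rat.instEncodable

theorem Rat.pairCode_eq (q : ℚ) : Rat.pairCode q = Nat.pair (encode q.num) q.den := rfl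

theorem Rat.mem_range_pairCode_iff (m : ℕ) : m ∈ Set.range Rat.pairCode ↔
    0 < m.unpair.2 ∧ (Denumerable.ofNat ℤ m.unpair.1).natAbs.Coprime m.unpair.2 := by
  constructor
  · rintro ⟨q, rfl⟩
    simp only [Rat.pairCode_eq, Nat.unpair_pair, Denumerable.ofNat_encode]
    exact ⟨q.den_pos, q.reduced⟩
  · rintro ⟨hpos, hcop⟩
    refine ⟨⟨Denumerable.ofNat ℤ m.unpair.1, m.unpair.2, hpos.ne', hcop⟩, ?_⟩
    simp only [Rat.pairCode_eq, Denumerable.encode_ofNat, Nat.pair_unpair]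

theorem Computable.rat_pairCode : Computable Rat.pairCode := by
  let _ : DecidablePred (· ∈ Set.range Rat.pairCode) := Encodable.decidableRangeEncode ℚ
  have _ : Infinite (Set.range Rat.pairCode) :=
    Set.infinite_coe_iff.mpr (Set.infinite_range_of_injective encode_injective)
  have hs : Computable fun m => decide (m ∈ Set.range Rat.pairCode) := by
    have : PrimrecPred fun m : ℕ => 0 < m.unpair.2 ∧
        Nat.gcd (Denumerable.ofNat ℤ m.unpair.1).natAbs m.unpair.2 = 1 :=
      (Primrec.nat_lt.comp (Primrec.const 0) (Primrec.snd.comp Primrec.unpair)).and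
        (Primrec.eq.comp (Primrec.nat_gcd.comp (Primrec.int_natAbs.comp
          ((Primrec.ofNat ℤ).comp (Primrec.fst.comp Primrec.unpair)))
          (Primrec.snd.comp Primrec.unpair)) (Primrec.const 1))
    exact this.decide.to_comp.of_eq fun m =>
      decide_eq_decide.mpr (Rat.mem_range_pairCode_iff m).symm
  have key (n : ℕ) : Rat.pairCode (Denumerable.ofNat ℚ n) =
      Nat.Subtype.ofNat (Set.range Rat.pairCode) n := by
    let _ := Nat.Subtype.denumerable (Set.range Rat.pairCode)
    show Rat.pairCode (@Denumerable.ofNat ℚ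
      (Denumerable.ofEquiv _ (equivRangeEncode ℚ)) n) = _
    rw [Denumerable.ofEquiv_ofNat]
    exact congrArg Subtype.val ((equivRangeEncode ℚ).apply_symm_apply _)
  exact ((nat_subtype_ofNat hs).comp (Computable.encode (α := ℚ))).of_eq fun q => by
    rw [← key, Denumerable.ofNat_encode]

theorem Rat.intCast_div_natCast_eq_iff (z : ℤ) (d : ℕ) (q : ℚ) :
    (z / d : ℚ) = q ↔ if d = 0 then q.num = 0 else q.num * d = z * q.den := by
  split_ifs with hd
  · simp [hd, eq_comm]
  · rw [← Rat.num_div_den q, div_eq_div_iff (by exact_mod_cast hd) (by simp), Rat.num_div_den]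
    exact_mod_cast eq_comm

namespace Computable

theorem rat_num : Computable Rat.num :=
  ((Computable.ofNat ℤ).comp (fst.comp (Primrec.unpair.to_comp.comp rat_pairCode))).of_eq
    fun q => by simp only [Rat.pairCode_eq, Nat.unpair_pair, Denumerable.ofNat_encode]

theorem rat_den : Computable Rat.den :=
  (snd.comp (Primrec.unpair.to_comp.comp rat_pairCode)).of_eq fun q => by
    simp only [Rat.pairCode_eq, Nat.unpair_pair]

theorem rat_intCast_div_natCast : Computable₂ fun (z : ℤ) (d : ℕ) => (z / d : ℚ) := by
  have hgraph : Computable₂ fun (zd : ℤ × ℕ) (q : ℚ) =>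
      bif zd.2 == 0 then q.num == 0 else q.num * zd.2 == zd.1 * q.den :=
    (cond (Primrec.beq.to_comp.comp (snd.comp fst) (const 0))
      (Primrec.beq.to_comp.comp (rat_num.comp snd) (const 0))
      (Primrec.beq.to_comp.comp
        (Primrec.int_mul.to_comp.comp (rat_num.comp snd)
          (Primrec.int_natCast.to_comp.comp (snd.comp fst)))
        (Primrec.int_mul.to_comp.comp (fst.comp fst)
          (Primrec.int_natCast.to_comp.comp (rat_den.comp snd))))).to₂
  refine (of_graph (f := fun zd : ℤ × ℕ => (zd.1 / zd.2 : ℚ)) hgraph fun zd q => ?_).to₂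
  rw [Rat.intCast_div_natCast_eq_iff]
  split_ifs with hd <;> simp [hd]

theorem rat_num_mul_den : Computable₂ fun q r : ℚ => q.num * r.den :=
  (Primrec.int_mul.to_comp.comp (rat_num.comp fst)
    (Primrec.int_natCast.to_comp.comp (rat_den.comp snd))).to₂

theorem rat_add : Computable₂ ((· + ·) : ℚ → ℚ → ℚ) :=
  (rat_intCast_div_natCast.comp
    (Primrec.int_add.to_comp.comp rat_num_mul_den (rat_num_mul_den.comp snd fst))
    (Primrec.nat_mul.to_comp.comp (rat_den.comp fst) (rat_den.comp snd))).of_eq fun p => by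
    conv_rhs => rw [← Rat.num_div_den p.1, ← Rat.num_div_den p.2]
    dsimp only
    rw [div_add_div _ _ (by simp) (by simp)]
    push_cast
    ring

theorem rat_neg : Computable (Neg.neg : ℚ → ℚ) :=
  (rat_intCast_div_natCast.comp (Primrec.int_neg.to_comp.comp rat_num) rat_den).of_eq fun q => by
    rw [Int.cast_neg, neg_div, Rat.num_div_den]

theorem rat_sub : Computable₂ ((· - ·) : ℚ → ℚ → ℚ) :=
  (rat_add.comp fst (rat_neg.comp snd)).of_eq fun p => (sub_eq_add_neg p.1 p.2).symm

theorem rat_mul : Computable₂ ((· * ·) : ℚ → ℚ → ℚ) :=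
  (rat_intCast_div_natCast.comp
    (Primrec.int_mul.to_comp.comp (rat_num.comp fst) (rat_num.comp snd))
    (Primrec.nat_mul.to_comp.comp (rat_den.comp fst) (rat_den.comp snd))).of_eq fun p => by
    dsimp only
    rw [Int.cast_mul, Nat.cast_mul, ← div_mul_div_comm, Rat.num_div_den, Rat.num_div_den]

theorem rat_le : Computable₂ fun q r : ℚ => decide (q ≤ r) :=
  ((Primrec.int_le.decide.to_comp.comp rat_num_mul_den (rat_num_mul_den.comp snd fst)).of_eq
    fun p => decide_eq_decide.mpr (Rat.le_iff p.1 p.2).symm).to₂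

theorem rat_max : Computable₂ (max : ℚ → ℚ → ℚ) :=
  (cond rat_le snd fst).of_eq fun p => by
    rw [max_def]
    split_ifs with h <;> simp [h]

end Computable

section Cover

variable (a b : ℕ → ℚ) (e : ℚ)

def coverRadius (s : ℕ) : ℚ := e * (b (s + 1) - b s)

def coverCenter : ℕ → ℚ
  | 0 => a 0
  | s + 1 => max (coverCenter s + coverRadius b e s) (a (s + 1))

def coverInterval (s : ℕ) : Option (ℚ × ℚ) :=
  some (coverCenter a b e s - coverRadius b e s, coverCenter a b e s + coverRadius b e s)

theorem intervalOf_coverInterval (s : ℕ) :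
    intervalOf (coverInterval a b e s) = Set.Ioo
      ((coverCenter a b e s : ℝ) - coverRadius b e s)
      ((coverCenter a b e s : ℝ) + coverRadius b e s) := by
  simp [coverInterval, intervalOf]

theorem coverRadius_nonneg (hb : Monotone b) (he : 0 ≤ e) (s : ℕ) :
    0 ≤ coverRadius b e s :=
  mul_nonneg he (sub_nonneg.mpr (hb s.le_succ))

theorem sum_range_coverRadius (N : ℕ) :
    ∑ s ∈ Finset.range N, coverRadius b e s = e * (b N - b 0) := by
  rw [← Finset.sum_range_sub b, Finset.mul_sum]
  rfl

theorem le_coverCenter (s : ℕ) : a s ≤ coverCenter a b e s := by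
  cases s with
  | zero => exact le_rfl
  | succ s => exact le_max_right _ _

theorem monotone_coverCenter_sub : Monotone fun s => coverCenter a b e s - e * b s :=
  monotone_nat_of_le_succ fun s => by
    have : coverCenter a b e s + coverRadius b e s ≤ coverCenter a b e (s + 1) := le_max_left _ _
    rw [coverRadius] at this
    linarith

theorem volume_iUnion_coverInterval_le {B : ℝ} (hb : Monotone b) (hbB : ∀ n, (b n : ℝ) ≤ B)
    (he : 0 ≤ e) :
    volume (⋃ s, intervalOf (coverInterval a b e s)) ≤ ENNReal.ofReal (2 * e * (B - b 0)) := by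
  calc volume (⋃ s, intervalOf (coverInterval a b e s))
      ≤ ∑' s, volume (intervalOf (coverInterval a b e s)) := measure_iUnion_le _
    _ = ∑' s, ENNReal.ofReal (2 * coverRadius b e s) := by
      congr 1; ext s
      rw [intervalOf_coverInterval, Real.volume_Ioo]
      ring_nf
    _ ≤ ENNReal.ofReal (2 * e * (B - b 0)) := ENNReal.tsum_le_of_sum_range_le fun N => by
      have hsum :
          ∑ s ∈ Finset.range N, 2 * (coverRadius b e s : ℝ) = 2 * e * (b N - b 0) := by
        rw [← Finset.mul_sum]
        exact_mod_cast by rw [sum_range_coverRadius, mul_assoc]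
      rw [← ENNReal.ofReal_sum_of_nonneg fun s _ => by
        have := coverRadius_nonneg b e hb he s; positivity, hsum]
      have : (0 : ℝ) ≤ e := by exact_mod_cast he
      exact ENNReal.ofReal_le_ofReal (by gcongr; exact hbB N)

theorem mem_iUnion_coverInterval {A B : ℝ} (haA : ∀ n, (a n : ℝ) ≤ A) (hb : Monotone b)
    (hB : Tendsto (fun n => (b n : ℝ)) atTop (nhds B)) (he : 0 ≤ e)
    (hfast : ∃ n, A - a n < e * (B - b n)) :
    A ∈ ⋃ s, intervalOf (coverInterval a b e s) := by
  by_contra hA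
  simp only [Set.mem_iUnion, intervalOf_coverInterval, not_exists] at hA
  have hcA (s : ℕ) : (coverCenter a b e s : ℝ) ≤ A := by
    induction s with
    | zero => exact haA 0
    | succ s ih =>
      have hr : (0 : ℝ) ≤ coverRadius b e s := by exact_mod_cast coverRadius_nonneg b e hb he s
      have hnext : (coverCenter a b e s : ℝ) + coverRadius b e s ≤ A := by
        by_contra! h
        exact hA s ⟨by linarith, h⟩
      rw [coverCenter]
      push_cast
      exact max_le hnext (haA _)
  obtain ⟨n, hn⟩ := hfast
  have hlim : (coverCenter a b e n : ℝ) - e * b n + e * B ≤ A := by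
    refine le_of_tendsto ((hB.const_mul (e : ℝ)).const_add _)
      (eventually_atTop.mpr ⟨n, fun s hs => ?_⟩)
    have := Rat.cast_le (K := ℝ) |>.mpr (monotone_coverCenter_sub a b e hs)
    push_cast at this
    linarith [hcA s]
  have := Rat.cast_le (K := ℝ) |>.mpr (le_coverCenter a b e n)
  linarith

end Cover

theorem Computable.coverInterval {α : Type*} [Primcodable α] {a b : ℕ → ℚ}
    (ha : Computable a) (hb : Computable b) {e : α → ℚ} (he : Computable e) :
    Computable₂ fun x s => coverInterval a b (e x) s := by
  have hr : Computable₂ fun x s => coverRadius b (e x) s :=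
    (rat_mul.comp (he.comp fst) (rat_sub.comp (hb.comp (succ.comp snd)) (hb.comp snd))).to₂
  have hc : Computable₂ fun x s => coverCenter a b (e x) s := by
    refine (nat_rec snd (ha.comp (const 0)) (rat_max.comp
      (rat_add.comp (snd.comp snd) (hr.comp (fst.comp fst) (fst.comp snd)))
      (ha.comp (succ.comp (fst.comp snd)))).to₂).of_eq fun ⟨x, s⟩ => ?_
    induction s with
    | zero => rfl
    | succ s ih => simp only at ih ⊢; rw [ih]; rfl
  exact (option_some.comp ((rat_sub.comp hc hr).pair (rat_add.comp hc hr))).to₂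

def twoPowMulInv (M k : ℕ) : ℚ := ((2 ^ (k + 1) * M : ℕ) : ℚ)⁻¹

theorem twoPowMulInv_pos {M : ℕ} (hM : 0 < M) (k : ℕ) : 0 < twoPowMulInv M k := by
  unfold twoPowMulInv
  positivity

theorem Computable.twoPowMulInv (M : ℕ) : Computable (twoPowMulInv M) :=
  (rat_intCast_div_natCast.comp (const 1) (Primrec.nat_mul.comp
    ((Primrec₂.unpaired'.mp Nat.Primrec.pow).comp (Primrec.const 2) Primrec.succ)
    (Primrec.const M)).to_comp).of_eq fun k => by
    rw [Int.cast_one, one_div, _root_.twoPowMulInv]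

theorem ofReal_two_mul_twoPowMulInv_mul_le {M : ℕ} {x : ℝ} (hx : x ≤ M) (k : ℕ) :
    ENNReal.ofReal (2 * twoPowMulInv M k * x) ≤ (2 : ℝ≥0∞)⁻¹ ^ k := by
  rcases Nat.eq_zero_or_pos M with rfl | hM
  · simp [twoPowMulInv]
  have hscale : 2 * (twoPowMulInv M k : ℝ) * M = 2⁻¹ ^ k := by
    simp only [twoPowMulInv]
    push_cast
    rw [inv_pow, pow_succ]
    field_simp
  calc ENNReal.ofReal (2 * twoPowMulInv M k * x) ≤ ENNReal.ofReal (2⁻¹ ^ k) := by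
        rw [← hscale]
        have : (0 : ℝ) < twoPowMulInv M k := by exact_mod_cast twoPowMulInv_pos hM k
        gcongr
    _ = (2 : ℝ≥0∞)⁻¹ ^ k := by
        rw [ENNReal.ofReal_pow (by norm_num), ENNReal.ofReal_inv_of_pos two_pos,
          ENNReal.ofReal_ofNat]

/-- If for every `ε > 0` some `n` has `A - a n < ε (B - b n)`, then `A` is not
Martin-Löf random. -/
theorem not_random_of_fast_b (a b : ℕ → ℚ) (A B : ℝ)
    (ha : Computable a) (hb : Computable b) (hma : StrictMono a) (hmb : StrictMono b)
    (hA : Tendsto (fun n => (a n : ℝ)) atTop (nhds A))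
    (hB : Tendsto (fun n => (b n : ℝ)) atTop (nhds B))
    (hfast : ∀ ε : ℝ, 0 < ε → ∃ n, A - (a n : ℝ) < ε * (B - (b n : ℝ))) :
    ¬ MLRandom A := by
  have haA : ∀ n, (a n : ℝ) ≤ A := (Rat.cast_mono.comp hma.monotone).ge_of_tendsto hA
  have hbB : ∀ n, (b n : ℝ) ≤ B := (Rat.cast_mono.comp hmb.monotone).ge_of_tendsto hB
  obtain ⟨M, hM⟩ := exists_nat_gt (B - b 0)
  have hM0 : 0 < M := by exact_mod_cast (sub_nonneg.mpr (hbB 0)).trans_lt hM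
  have he (k : ℕ) := twoPowMulInv_pos hM0 k
  intro hrand
  obtain ⟨k, hk⟩ := hrand (fun k => coverInterval a b (twoPowMulInv M k))
    ⟨Computable.coverInterval ha hb (Computable.twoPowMulInv M), fun k =>
      (volume_iUnion_coverInterval_le a b _ hmb.monotone hbB (he k).le).trans
        (ofReal_two_mul_twoPowMulInv_mul_le hM.le k)⟩
  exact hk (mem_iUnion_coverInterval a b _ haA hmb.monotone hB (he k).le
    (hfast _ (by exact_mod_cast he k)))
end

section
/- Boundedness of relative convergence speed: if (a_n), (b_n) are increasing computable rational sequences converging to A and B, with A Martin-Löf random, then the sequence (B - b_n)/(A - a_n) is bounded above, i.e., there is a constant C with B - b_n ≤ C(A - a_n) for all n. -/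
open Filter MeasureTheory
open scoped ENNReal

/-!
Fix a rational `δ > 0` with `δ (B - b 0) ≤ 1` and put `ε = δ 2⁻ᵏ`. The running maximum
`R s = max_{n ≤ s} (a n + ε (b s - b n))` is computable from `a` and `b`, and the intervals
`(a s, R s)` cover a set of measure at most `ε (B - b 0) ≤ 2⁻ᵏ`: passing from `s` to `s + 1`
adds at most `ε (b (s + 1) - b s)` to what is already covered. So these intervals form a
Martin-Löf test. A random `A` escapes some level `k`; as `a s < A`, this means `R s ≤ A` for
every `s`, hence `a n + ε (B - b n) ≤ A` in the limit, i.e. `B - b n ≤ ε⁻¹ (A - a n)`.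

The test is computable because rational arithmetic is primitive recursive for `Primcodable ℚ`,
which is seen by computing with triples `(p, n, d)` of naturals standing for `(p - n) / (d + 1)`.
-/

open Encodable

theorem Nat.findGreatest_dvd_and_dvd_eq_gcd (a b : ℕ) :
    Nat.findGreatest (fun d => d ∣ a ∧ d ∣ b) (a + b) = Nat.gcd a b := by
  rw [Nat.findGreatest_eq_iff]
  refine ⟨?_, fun _ => ⟨Nat.gcd_dvd_left a b, Nat.gcd_dvd_right a b⟩, ?_⟩
  · rcases Nat.eq_zero_or_pos a with rfl | ha
    · simp
    · exact (Nat.gcd_le_left b ha).trans (Nat.le_add_right a b)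
  · rintro k hk hkab ⟨hka, hkb⟩
    rcases Nat.eq_zero_or_pos (Nat.gcd a b) with h0 | hpos
    · rw [Nat.gcd_eq_zero_iff] at h0
      omega
    · exact hk.not_ge (Nat.le_of_dvd hpos (Nat.dvd_gcd hka hkb))

theorem Int.natAbs_eq_encode (z : ℤ) : z.natAbs = (encode z + 1) / 2 := by
  rcases z with n | n
  · show n = (2 * n + 1) / 2
    omega
  · show n + 1 = (2 * n + 1 + 1) / 2
    omega

theorem Int.encode_le_two_mul_natAbs (z : ℤ) : encode z ≤ 2 * z.natAbs := by
  rcases z with n | n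
  · exact le_refl (2 * n)
  · show 2 * n + 1 ≤ 2 * (n + 1)
    omega

namespace Primrec

theorem nat_count {p : ℕ → Prop} [DecidablePred p] (hp : PrimrecPred p) :
    Primrec (Nat.count p) :=
  (list_length.comp ((listFilter hp).comp list_range)).of_eq fun n => by
    rw [Nat.count, List.countP_eq_length_filter]

end Primrec

/-- `Encodable.encode` on `ℚ` is `Rat.instEncodable`, which codes `q` as
`Nat.pair (encode q.num) q.den`. The `Primcodable ℚ` structure is a different encoding: it
numbers these codes in increasing order (`Denumerable.ofEncodableOfInfinite`). -/
def ratCode (q : ℚ) : ℕ := encode q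

theorem ratCode_eq (q : ℚ) : ratCode q = Nat.pair (encode q.num) q.den := rfl

theorem ratCode_natCast (j : ℕ) : ratCode j = Nat.pair (2 * j) 1 := by
  rw [ratCode_eq, Rat.num_natCast, Rat.den_natCast]
  rfl

def IsRatCode (m : ℕ) : Prop := 0 < m.unpair.2 ∧ Nat.Coprime ((m.unpair.1 + 1) / 2) m.unpair.2

instance : DecidablePred IsRatCode := fun _ => instDecidableAnd

theorem isRatCode_iff_mem_range {m : ℕ} : IsRatCode m ↔ m ∈ Set.range ratCode := by
  constructor
  · rintro ⟨hpos, hcop⟩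
    set z : ℤ := Denumerable.ofNat ℤ m.unpair.1
    have hz : encode z = m.unpair.1 := Denumerable.encode_ofNat _
    refine ⟨⟨z, m.unpair.2, hpos.ne', by rwa [Int.natAbs_eq_encode, hz]⟩, ?_⟩
    show Nat.pair (encode z) m.unpair.2 = m
    rw [hz, Nat.pair_unpair]
  · rintro ⟨q, rfl⟩
    rw [IsRatCode, ratCode_eq, Nat.unpair_pair, ← Int.natAbs_eq_encode]
    exact ⟨q.pos, q.reduced⟩

theorem isRatCode_ratCode (q : ℚ) : IsRatCode (ratCode q) :=
  isRatCode_iff_mem_range.2 ⟨q, rfl⟩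

theorem encode_eq_count_isRatCode (q : ℚ) :
    @encode ℚ Primcodable.toEncodable q = Nat.count IsRatCode (ratCode q) := by
  have h (m : ℕ) : @decide (m ∈ Set.range ratCode) (decidableRangeEncode ℚ m) =
      decide (IsRatCode m) :=
    Bool.eq_iff_iff.2 <| (@decide_eq_true_iff _ (decidableRangeEncode ℚ m)).trans <|
      isRatCode_iff_mem_range.symm.trans decide_eq_true_iff.symm
  calc _ = (List.range (ratCode q)).countP
        fun m => @decide (m ∈ Set.range ratCode) (decidableRangeEncode ℚ m) := rfl
    _ = _ := by simp only [h]; rfl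

/-- The codes of the naturals `0, 1, …, e` are increasing, so there are at least `e` codes below
the code of `e`. -/
theorem ratCode_le_ratCode_natCast_encode (q : ℚ) :
    ratCode q ≤ ratCode (@encode ℚ Primcodable.toEncodable q : ℚ) := by
  have hmono : StrictMono fun j : ℕ => @encode ℚ Primcodable.toEncodable j := fun i j hij => by
    simp only [encode_eq_count_isRatCode]
    refine Nat.count_strict_mono (isRatCode_ratCode _) ?_
    rw [ratCode_natCast, ratCode_natCast]
    exact Nat.pair_lt_pair_left 1 (by omega)
  by_contra! h
  have := Nat.count_strict_mono (isRatCode_ratCode _) h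
  rw [← encode_eq_count_isRatCode, ← encode_eq_count_isRatCode] at this
  exact (hmono.id_le _).not_gt this

section RatArith

open Primrec

theorem primrecPred_isRatCode : PrimrecPred IsRatCode :=
  .and (nat_lt.comp (const 0) (snd.comp unpair))
    (Primrec.eq.comp (nat_gcd.comp (nat_div.comp (succ.comp (fst.comp unpair)) (const 2))
      (snd.comp unpair)) (const 1))

theorem primrec_ratCode : Primrec ratCode := by
  refine of_graph ⟨fun q => Nat.pair (2 * @encode ℚ Primcodable.toEncodable q) 1,
    Primrec₂.natPair.comp (nat_mul.comp (const 2) Primrec.encode) (const 1),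
    fun q => (ratCode_le_ratCode_natCast_encode q).trans_eq (ratCode_natCast _)⟩ ?_
  refine (PrimrecPred.and (primrecPred_isRatCode.comp snd)
    (Primrec.eq.comp ((nat_count primrecPred_isRatCode).comp snd)
      (Primrec.encode.comp fst))).of_eq ?_
  rintro ⟨q, m⟩
  dsimp only
  constructor
  · rintro ⟨hm, hcount⟩
    obtain ⟨r, rfl⟩ := isRatCode_iff_mem_range.1 hm
    rw [← encode_eq_count_isRatCode] at hcount
    exact congrArg ratCode (@encode_injective ℚ Primcodable.toEncodable _ _ hcount).symm
  · rintro rfl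
    exact ⟨isRatCode_ratCode q, (encode_eq_count_isRatCode q).symm⟩

theorem Primrec.rat_num : Primrec Rat.num :=
  encode_iff.1 <| (fst.comp (unpair.comp primrec_ratCode)).of_eq fun q => by
    rw [ratCode_eq, Nat.unpair_pair]

theorem Primrec.rat_den : Primrec Rat.den :=
  (snd.comp (unpair.comp primrec_ratCode)).of_eq fun q => by rw [ratCode_eq, Nat.unpair_pair]

/-- The denominator is shifted so that no triple meets the junk value of division by zero. -/
def ratOfParts (t : ℕ × ℕ × ℕ) : ℚ := ((t.1 : ℚ) - t.2.1) / (t.2.2 + 1)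

def ratParts (q : ℚ) : ℕ × ℕ × ℕ := (q.num.toNat, (-q.num).toNat, q.den - 1)

def addParts (t u : ℕ × ℕ × ℕ) : ℕ × ℕ × ℕ :=
  (t.1 * (u.2.2 + 1) + u.1 * (t.2.2 + 1), t.2.1 * (u.2.2 + 1) + u.2.1 * (t.2.2 + 1),
    t.2.2 * u.2.2 + t.2.2 + u.2.2)

def mulParts (t u : ℕ × ℕ × ℕ) : ℕ × ℕ × ℕ :=
  (t.1 * u.1 + t.2.1 * u.2.1, t.1 * u.2.1 + t.2.1 * u.1, t.2.2 * u.2.2 + t.2.2 + u.2.2)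

def negParts (t : ℕ × ℕ × ℕ) : ℕ × ℕ × ℕ := (t.2.1, t.1, t.2.2)

theorem ratOfParts_ratParts (q : ℚ) : ratOfParts (ratParts q) = q := by
  have hden : ((q.den - 1 : ℕ) : ℚ) + 1 = q.den := by
    rw [Nat.cast_sub q.pos, Nat.cast_one, sub_add_cancel]
  rw [ratOfParts, ratParts, hden]
  exact_mod_cast (Int.toNat_sub_toNat_neg q.num).symm ▸ Rat.num_div_den q

theorem ratOfParts_eq_zero_iff (t : ℕ × ℕ × ℕ) : ratOfParts t = 0 ↔ t.1 = t.2.1 := by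
  rw [ratOfParts, div_eq_zero_iff, sub_eq_zero, Nat.cast_inj]
  exact or_iff_left (by positivity)

theorem ratOfParts_addParts (t u : ℕ × ℕ × ℕ) :
    ratOfParts (addParts t u) = ratOfParts t + ratOfParts u := by
  simp only [ratOfParts, addParts]
  push_cast
  field_simp
  ring

theorem ratOfParts_mulParts (t u : ℕ × ℕ × ℕ) :
    ratOfParts (mulParts t u) = ratOfParts t * ratOfParts u := by
  simp only [ratOfParts, mulParts]
  push_cast
  field_simp
  ring

theorem ratOfParts_negParts (t : ℕ × ℕ × ℕ) : ratOfParts (negParts t) = -ratOfParts t := by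
  simp only [ratOfParts, negParts]
  ring

theorem encode_ratOfParts_le (t : ℕ × ℕ × ℕ) :
    @encode ℚ Primcodable.toEncodable (ratOfParts t) ≤
      Nat.pair (2 * (t.1 + t.2.1)) (t.2.2 + 1) := by
  have hq : ratOfParts t = Rat.divInt ((t.1 : ℤ) - t.2.1) (t.2.2 + 1 : ℕ) := by
    rw [ratOfParts, Rat.divInt_eq_div]
    push_cast
    rfl
  have hnum : (ratOfParts t).num.natAbs ≤ t.1 + t.2.1 := by
    rcases eq_or_ne ((t.1 : ℤ) - t.2.1) 0 with h | h
    · rw [hq, h, Rat.zero_divInt, Rat.num_zero, Int.natAbs_zero]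
      exact Nat.zero_le _
    · have := Int.natAbs_le_of_dvd_ne_zero (hq ▸ Rat.num_dvd _ (by positivity)) h
      omega
  have hden : (ratOfParts t).den ≤ t.2.2 + 1 :=
    Nat.le_of_dvd (Nat.succ_pos _) (Int.ofNat_dvd.1 (hq ▸ Rat.den_dvd _ _))
  rw [encode_eq_count_isRatCode]
  refine (Nat.count_le _).trans ?_
  rw [ratCode_eq]
  exact ((StrictMono.monotone fun _ _ => Nat.pair_lt_pair_left _)
    ((Int.encode_le_two_mul_natAbs _).trans (by omega))).trans
    ((StrictMono.monotone fun _ _ => Nat.pair_lt_pair_right _) hden)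

theorem primrec_ratParts : Primrec ratParts :=
  pair (int_toNat.comp rat_num) (pair (int_toNat.comp (int_neg.comp rat_num)) (pred.comp rat_den))

theorem primrec_negParts : Primrec negParts :=
  pair (fst.comp snd) (pair fst (snd.comp snd))

theorem primrec_addParts : Primrec₂ addParts := by
  have t₁ : Primrec fun x : (ℕ × ℕ × ℕ) × ℕ × ℕ × ℕ => x.1.1 := fst.comp fst
  have t₂ : Primrec fun x : (ℕ × ℕ × ℕ) × ℕ × ℕ × ℕ => x.1.2.1 := fst.comp (snd.comp fst)
  have t₃ : Primrec fun x : (ℕ × ℕ × ℕ) × ℕ × ℕ × ℕ => x.1.2.2 := snd.comp (snd.comp fst)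
  have u₁ : Primrec fun x : (ℕ × ℕ × ℕ) × ℕ × ℕ × ℕ => x.2.1 := fst.comp snd
  have u₂ : Primrec fun x : (ℕ × ℕ × ℕ) × ℕ × ℕ × ℕ => x.2.2.1 := fst.comp (snd.comp snd)
  have u₃ : Primrec fun x : (ℕ × ℕ × ℕ) × ℕ × ℕ × ℕ => x.2.2.2 := snd.comp (snd.comp snd)
  exact (pair (nat_add.comp (nat_mul.comp t₁ (succ.comp u₃)) (nat_mul.comp u₁ (succ.comp t₃)))
    (pair (nat_add.comp (nat_mul.comp t₂ (succ.comp u₃)) (nat_mul.comp u₂ (succ.comp t₃)))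
      (nat_add.comp (nat_add.comp (nat_mul.comp t₃ u₃) t₃) u₃))).of_eq fun _ => rfl

theorem primrec_mulParts : Primrec₂ mulParts := by
  have t₁ : Primrec fun x : (ℕ × ℕ × ℕ) × ℕ × ℕ × ℕ => x.1.1 := fst.comp fst
  have t₂ : Primrec fun x : (ℕ × ℕ × ℕ) × ℕ × ℕ × ℕ => x.1.2.1 := fst.comp (snd.comp fst)
  have t₃ : Primrec fun x : (ℕ × ℕ × ℕ) × ℕ × ℕ × ℕ => x.1.2.2 := snd.comp (snd.comp fst)
  have u₁ : Primrec fun x : (ℕ × ℕ × ℕ) × ℕ × ℕ × ℕ => x.2.1 := fst.comp snd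
  have u₂ : Primrec fun x : (ℕ × ℕ × ℕ) × ℕ × ℕ × ℕ => x.2.2.1 := fst.comp (snd.comp snd)
  have u₃ : Primrec fun x : (ℕ × ℕ × ℕ) × ℕ × ℕ × ℕ => x.2.2.2 := snd.comp (snd.comp snd)
  exact (pair (nat_add.comp (nat_mul.comp t₁ u₁) (nat_mul.comp t₂ u₂))
    (pair (nat_add.comp (nat_mul.comp t₁ u₂) (nat_mul.comp t₂ u₁))
      (nat_add.comp (nat_add.comp (nat_mul.comp t₃ u₃) t₃) u₃))).of_eq fun _ => rfl

theorem primrec_ratOfParts : Primrec ratOfParts := by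
  refine encode_iff.1 <| of_graph ⟨_, Primrec₂.natPair.comp (nat_mul.comp (const 2)
    (nat_add.comp fst (fst.comp snd))) (succ.comp (snd.comp snd)), encode_ratOfParts_le⟩ ?_
  have hdiff : Primrec fun x : (ℕ × ℕ × ℕ) × ℕ =>
      addParts x.1 (negParts (ratParts (Denumerable.ofNat ℚ x.2))) :=
    primrec_addParts.comp fst (primrec_negParts.comp (primrec_ratParts.comp
      ((Primrec.ofNat ℚ).comp snd)))
  refine (Primrec.eq.comp (fst.comp hdiff) (fst.comp (snd.comp hdiff))).of_eq ?_
  rintro ⟨t, m⟩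
  dsimp only
  rw [← ratOfParts_eq_zero_iff, ratOfParts_addParts, ratOfParts_negParts, ratOfParts_ratParts,
    ← sub_eq_add_neg, sub_eq_zero]
  constructor
  · intro h
    rw [h, Denumerable.encode_ofNat]
  · rintro rfl
    exact (Denumerable.ofNat_encode _).symm

theorem Primrec.rat_add : Primrec₂ ((· + ·) : ℚ → ℚ → ℚ) :=
  (primrec_ratOfParts.comp (primrec_addParts.comp (primrec_ratParts.comp fst)
    (primrec_ratParts.comp snd))).of_eq fun _ => by
      rw [ratOfParts_addParts, ratOfParts_ratParts, ratOfParts_ratParts]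

theorem Primrec.rat_mul : Primrec₂ ((· * ·) : ℚ → ℚ → ℚ) :=
  (primrec_ratOfParts.comp (primrec_mulParts.comp (primrec_ratParts.comp fst)
    (primrec_ratParts.comp snd))).of_eq fun _ => by
      rw [ratOfParts_mulParts, ratOfParts_ratParts, ratOfParts_ratParts]

theorem Primrec.rat_neg : Primrec (Neg.neg : ℚ → ℚ) :=
  (primrec_ratOfParts.comp (primrec_negParts.comp primrec_ratParts)).of_eq fun _ => by
    rw [ratOfParts_negParts, ratOfParts_ratParts]

theorem Primrec.rat_sub : Primrec₂ ((· - ·) : ℚ → ℚ → ℚ) :=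
  (rat_add.comp fst (rat_neg.comp snd)).of_eq fun _ => (sub_eq_add_neg _ _).symm

theorem Primrec.rat_le : PrimrecRel ((· ≤ ·) : ℚ → ℚ → Prop) :=
  (Primrec.eq.comp (int_toNat.comp (int_neg.comp (rat_num.comp (rat_sub.comp snd fst))))
    (const 0)).of_eq fun _ => by
      rw [Int.toNat_eq_zero, neg_nonpos, Rat.num_nonneg, sub_nonneg]

theorem Primrec.rat_max : Primrec₂ (max : ℚ → ℚ → ℚ) :=
  (ite (rat_le.comp fst snd) snd fst).of_eq fun _ => (max_def _ _).symm

theorem Primrec.rat_pow : Primrec₂ ((· ^ ·) : ℚ → ℕ → ℚ) :=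
  (nat_rec (const 1) (rat_mul.comp (snd.comp snd) fst).to₂).of_eq fun q n => by
    induction n with
    | zero => exact (pow_zero q).symm
    | succ n ih => rw [pow_succ, ← ih]

end RatArith

open Filter MeasureTheory Set Topology

section Envelope

variable {K : Type*} [CommRing K] [LinearOrder K] (a b : ℕ → K) (ε : K)

/-- `envelope a b ε s = max_{n ≤ s} (a n + ε * (b s - b n))`. -/
def envelope : ℕ → K
  | 0 => a 0
  | s + 1 => max (a (s + 1)) (envelope s + ε * (b (s + 1) - b s))

theorem le_envelope [IsOrderedRing K] {n s : ℕ} (h : n ≤ s) :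
    a n + ε * (b s - b n) ≤ envelope a b ε s := by
  induction h with
  | refl => cases n <;> simp [envelope]
  | @step s _ ih =>
    calc a n + ε * (b (s + 1) - b n) = a n + ε * (b s - b n) + ε * (b (s + 1) - b s) := by ring
      _ ≤ envelope a b ε s + ε * (b (s + 1) - b s) := by gcongr
      _ ≤ envelope a b ε (s + 1) := le_max_right _ _

theorem envelope_succ_le [IsOrderedRing K] {s : ℕ} (hε : 0 ≤ ε) (hb : b s ≤ b (s + 1)) :
    envelope a b ε (s + 1) ≤ max (a (s + 1)) (envelope a b ε s) + ε * (b (s + 1) - b s) := by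
  have : 0 ≤ ε * (b (s + 1) - b s) := mul_nonneg hε (sub_nonneg.2 hb)
  exact max_le (le_add_of_le_of_nonneg (le_max_left _ _) this) (by gcongr; exact le_max_right _ _)

theorem Ioo_envelope_subset (ha : Monotone a) (s : ℕ) :
    Ioo (a s) (envelope a b ε s) ⊆
      ⋃ t, Ico (max (a (t + 1)) (envelope a b ε t)) (envelope a b ε (t + 1)) := by
  induction s with
  | zero => simp [envelope]
  | succ s ih =>
    rintro x ⟨hax, hx⟩
    rcases lt_or_ge x (max (a (s + 1)) (envelope a b ε s)) with h | h
    · exact ih ⟨(ha s.le_succ).trans_lt hax, (lt_max_iff.1 h).resolve_left hax.not_gt⟩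
    · exact mem_iUnion.2 ⟨s, h, hx⟩

end Envelope

theorem Rat.cast_envelope {K : Type*} [Field K] [LinearOrder K] [IsStrictOrderedRing K]
    (a b : ℕ → ℚ) (ε : ℚ) (s : ℕ) :
    ((envelope a b ε s : ℚ) : K) = envelope (fun n => (a n : K)) (fun n => (b n : K)) ε s := by
  induction s with
  | zero => rfl
  | succ s ih => simp only [envelope, Rat.cast_max, Rat.cast_add, Rat.cast_mul, Rat.cast_sub, ih]

theorem volume_iUnion_Ioo_envelope_le {a b : ℕ → ℝ} {ε B : ℝ} (hε : 0 ≤ ε) (ha : Monotone a)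
    (hb : Monotone b) (hbB : ∀ n, b n ≤ B) :
    volume (⋃ s, Ioo (a s) (envelope a b ε s)) ≤ ENNReal.ofReal (ε * (B - b 0)) := by
  have hstep (t : ℕ) : 0 ≤ ε * (b (t + 1) - b t) := mul_nonneg hε (sub_nonneg.2 (hb t.le_succ))
  calc volume (⋃ s, Ioo (a s) (envelope a b ε s))
      ≤ volume (⋃ t, Ico (max (a (t + 1)) (envelope a b ε t)) (envelope a b ε (t + 1))) :=
        measure_mono (iUnion_subset (Ioo_envelope_subset a b ε ha))
    _ ≤ ∑' t, volume (Ico (max (a (t + 1)) (envelope a b ε t)) (envelope a b ε (t + 1))) :=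
        measure_iUnion_le _
    _ ≤ ∑' t, ENNReal.ofReal (ε * (b (t + 1) - b t)) := ENNReal.tsum_le_tsum fun t => by
        rw [Real.volume_Ico]
        exact ENNReal.ofReal_le_ofReal (by linarith [envelope_succ_le a b ε hε (hb t.le_succ)])
    _ ≤ ENNReal.ofReal (ε * (B - b 0)) := ENNReal.tsum_le_of_sum_range_le fun N => by
        rw [← ENNReal.ofReal_sum_of_nonneg fun t _ => hstep t, ← Finset.mul_sum,
          Finset.sum_range_sub b]
        exact ENNReal.ofReal_le_ofReal (mul_le_mul_of_nonneg_left (by linarith [hbB N]) hε)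

theorem add_mul_sub_le_of_notMem_Ioo_envelope {a b : ℕ → ℝ} {ε A B : ℝ}
    (hB : Tendsto b atTop (𝓝 B)) (haA : ∀ n, a n < A)
    (hA : ∀ s, A ∉ Ioo (a s) (envelope a b ε s)) (n : ℕ) : a n + ε * (B - b n) ≤ A := by
  have h (s : ℕ) (hs : n ≤ s) : a n + ε * (b s - b n) ≤ A :=
    (le_envelope a b ε hs).trans (not_lt.1 fun h => hA s ⟨haA s, h⟩)
  exact le_of_tendsto ((hB.sub_const _).const_mul ε |>.const_add _) (eventually_atTop.2 ⟨n, h⟩)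

theorem computable₂_envelope {a b : ℕ → ℚ} (ha : Computable a) (hb : Computable b) :
    Computable₂ (envelope a b) := by
  have hstep : Computable₂ fun (x : ℚ × ℕ) (p : ℕ × ℚ) =>
      max (a (p.1 + 1)) (p.2 + x.1 * (b (p.1 + 1) - b p.1)) :=
    Primrec.rat_max.to_comp.comp (ha.comp (Computable.succ.comp (Computable.fst.comp .snd)))
      (Primrec.rat_add.to_comp.comp (Computable.snd.comp .snd)
        (Primrec.rat_mul.to_comp.comp (Computable.fst.comp .fst)
          (Primrec.rat_sub.to_comp.comp
            (hb.comp (Computable.succ.comp (Computable.fst.comp .snd)))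
            (hb.comp (Computable.fst.comp .snd)))))
  refine (Computable.nat_rec .snd (.const (a 0)) hstep).of_eq ?_
  rintro ⟨ε, s⟩
  induction s with
  | zero => rfl
  | succ s ih => exact congrArg (fun r => max (a (s + 1)) (r + ε * (b (s + 1) - b s))) ih

theorem mlTest_envelope {a b : ℕ → ℚ} {B : ℝ} (ha : Computable a) (hb : Computable b)
    (ha' : Monotone a) (hb' : Monotone b) (hB : Tendsto (fun n => (b n : ℝ)) atTop (𝓝 B))
    {δ : ℚ} (hδ : 0 < δ) (hδB : δ * (B - b 0) ≤ 1) :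
    MLTest fun k s => some (a s, envelope a b (δ * 2⁻¹ ^ k) s) := by
  refine ⟨Computable.option_some.comp ((ha.comp .snd).pair ((computable₂_envelope ha hb).comp
    (Primrec.rat_mul.to_comp.comp (.const δ) (Primrec.rat_pow.to_comp.comp (.const 2⁻¹) .fst))
    .snd)), fun k => ?_⟩
  have hbB (n : ℕ) : (b n : ℝ) ≤ B := (Rat.cast_mono.comp hb').ge_of_tendsto hB n
  have hε : (0 : ℝ) ≤ ((δ * 2⁻¹ ^ k : ℚ) : ℝ) := by positivity
  simp only [intervalOf, Rat.cast_envelope]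
  calc _ ≤ ENNReal.ofReal ((δ * 2⁻¹ ^ k : ℚ) * (B - b 0)) :=
        volume_iUnion_Ioo_envelope_le hε (Rat.cast_mono.comp ha') (Rat.cast_mono.comp hb') hbB
    _ ≤ ENNReal.ofReal ((2 : ℝ)⁻¹ ^ k) := by
      refine ENNReal.ofReal_le_ofReal ?_
      push_cast
      calc (δ : ℝ) * 2⁻¹ ^ k * (B - b 0) = 2⁻¹ ^ k * (δ * (B - b 0)) := by ring
        _ ≤ 2⁻¹ ^ k * 1 := by gcongr
        _ = 2⁻¹ ^ k := mul_one _
    _ = 2⁻¹ ^ k := by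
      rw [ENNReal.ofReal_pow (by norm_num), ENNReal.ofReal_inv_of_pos two_pos,
        ENNReal.ofReal_ofNat]

/-- Boundedness of relative convergence speed: if `A` is Martin-Löf random then
`(B - b n)/(A - a n)` is bounded above, i.e. `B - b n ≤ C (A - a n)` for some `C`. -/
theorem ratio_bounded_of_random (a b : ℕ → ℚ) (A B : ℝ)
    (ha : Computable a) (hb : Computable b) (hma : StrictMono a) (hmb : StrictMono b)
    (hA : Tendsto (fun n => (a n : ℝ)) atTop (nhds A))
    (hB : Tendsto (fun n => (b n : ℝ)) atTop (nhds B))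
    (hrand : MLRandom A) :
    ∃ C : ℝ, ∀ n, B - (b n : ℝ) ≤ C * (A - (a n : ℝ)) := by
  obtain ⟨δ, hδ, hδB⟩ : ∃ δ : ℚ, 0 < δ ∧ δ * (B - b 0) ≤ 1 := by
    obtain ⟨N, hN⟩ := exists_nat_ge (B - b 0)
    refine ⟨(N + 1 : ℚ)⁻¹, by positivity, ?_⟩
    push_cast
    rw [inv_mul_le_iff₀ (by positivity)]
    linarith
  obtain ⟨k, hk⟩ := hrand _ (mlTest_envelope ha hb hma.monotone hmb.monotone hB hδ hδB)
  set ε : ℚ := δ * 2⁻¹ ^ k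
  have haA (n : ℕ) : (a n : ℝ) < A := (Rat.cast_lt.2 (hma n.lt_succ_self)).trans_le
    ((Rat.cast_mono.comp hma.monotone).ge_of_tendsto hA _)
  have hkey := add_mul_sub_le_of_notMem_Ioo_envelope hB haA fun s hs =>
    hk (mem_iUnion.2 ⟨s, by simpa only [intervalOf, Rat.cast_envelope] using hs⟩)
  refine ⟨(ε : ℝ)⁻¹, fun n => ?_⟩
  rw [le_inv_mul_iff₀ (by positivity)]
  linarith [hkey n]
end
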